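/- arXiv:1012.1256 — 6 statements merged into one kernel-verified Lean document; each statement's English description precedes it below -/
import Mathlib

section
/- The blossom is the unique symmetric multi-affine function with the diagonal property: if q' : ℝ^{δ_1+⋯+δ_n} → ℝ is (1) multi-affine (of degree at most 1 in each argument z_{k,l}), (2) symmetric within each block (q'(z) = q'(z') whenever z ≅ z'), and (3) satisfies q'(z_1,…,z_1,…,z_n,…,z_n) = p(z_1,…,z_n) for all (z_1,…,z_n) ∈ ℝ^n (each z_k repeated δ_k times), then q' equals the blossom q of p. -/
open Finset

/-- The normalized elementary symmetric polynomial
`B_{l,δ}(z) = binom(δ,l)⁻¹ ∑_{1≤σ₁<⋯<σ_l≤δ} z_{σ₁}⋯z_{σ_l}`. -/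
noncomputable def normEsymm (δ l : ℕ) (z : Fin δ → ℝ) : ℝ :=
  ((δ.choose l : ℝ))⁻¹ * ∑ s ∈ Finset.powersetCard l (Finset.univ : Finset (Fin δ)),
    ∏ i ∈ s, z i

/-- The polynomial `p(x) = ∑_{l ∈ Δ} c_l x₁^{l₁}⋯x_n^{l_n}` with coefficients `c`,
where `Δ = {0,…,δ₁} × ⋯ × {0,…,δ_n}`. -/
noncomputable def polyOf {n : ℕ} {δ : Fin n → ℕ} (c : (∀ k, Fin (δ k + 1)) → ℝ)
    (x : Fin n → ℝ) : ℝ :=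
  ∑ l : ∀ k, Fin (δ k + 1), c l * ∏ k, x k ^ (l k : ℕ)

/-- The blossom `q(z) = ∑_{l ∈ Δ} c_l ∏_k B_{l_k,δ_k}(z_{k,1},…,z_{k,δ_k})` of the
polynomial with coefficients `c`. -/
noncomputable def blossomOf {n : ℕ} {δ : Fin n → ℕ} (c : (∀ k, Fin (δ k + 1)) → ℝ)
    (z : ∀ k, Fin (δ k) → ℝ) : ℝ :=
  ∑ l : ∀ k, Fin (δ k + 1), c l * ∏ k, normEsymm (δ k) (l k) (z k)

/-- A function of the blocked variables `z = (z_{k,i})` is multi-affine if it is affine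
(degree at most 1) in each single argument `z_{k,i}`. -/
def MultiAffineB {n : ℕ} (δ : Fin n → ℕ) (q : (∀ k, Fin (δ k) → ℝ) → ℝ) : Prop :=
  ∀ (k : Fin n) (i : Fin (δ k)) (z : ∀ k, Fin (δ k) → ℝ) (s t θ : ℝ),
    q (Function.update z k (Function.update (z k) i (θ * s + (1 - θ) * t)))
      = θ * q (Function.update z k (Function.update (z k) i s))
        + (1 - θ) * q (Function.update z k (Function.update (z k) i t))

/-- `z ≅ z'` : each block of `z` is a permutation of the corresponding block of `z'`. -/
def BlockRel {n : ℕ} (δ : Fin n → ℕ) (z z' : ∀ k, Fin (δ k) → ℝ) : Prop :=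
  ∀ k, ∃ π : Equiv.Perm (Fin (δ k)), ∀ i, z k i = z' k (π i)

/-! A function on `ℝ^I` that is affine in each coordinate is a polynomial
`∑_S a_S ∏_{j ∈ S} w_j`, whose coefficients come from its values at the vertices of the unit
cube by Möbius inversion. Symmetry within the blocks makes `a_S` depend only on the block sizes
`m_k = |S ∩ block k|`. On the diagonal the expansion becomes
`∑_m (∑_{S of block sizes m} a_S) x^m`, so comparing coefficients with `p` gives
`a_S = c_m / ∏_k binom(δ_k, m_k)`, which is the coefficient of `∏_{j ∈ S} z_j` in the blossom. -/

open Function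
open Fintype (piFinset mem_piFinset)

section MultiAffine

variable {I : Type*} [DecidableEq I]

def IsMultiAffine (Q : (I → ℝ) → ℝ) : Prop :=
  ∀ (j : I) (w : I → ℝ) (s t θ : ℝ),
    Q (update w j (θ * s + (1 - θ) * t)) = θ * Q (update w j s) + (1 - θ) * Q (update w j t)

def mobiusCoeff (Q : (I → ℝ) → ℝ) (S : Finset I) : ℝ :=
  ∑ T ∈ S.powerset, (-1) ^ #(S \ T) * Q (T.piecewise 1 0)

variable {Q : (I → ℝ) → ℝ}

lemma IsMultiAffine.apply_eq_update_zero_add (hQ : IsMultiAffine Q) (w : I → ℝ) (j : I) :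
    Q w = Q (update w j 0) + w j * (Q (update w j 1) - Q (update w j 0)) := by
  have h := hQ j w 1 0 (w j)
  simp only [mul_one, mul_zero, add_zero, update_eq_self] at h
  linarith

lemma IsMultiAffine.update_one_sub_update_zero (hQ : IsMultiAffine Q) (a : I) :
    IsMultiAffine fun w => Q (update w a 1) - Q (update w a 0) := by
  intro j w s t θ
  by_cases hja : j = a
  · subst hja
    simp only [update_idem]
    ring
  · simp only [update_comm hja, hQ j]
    ring

lemma mobiusCoeff_insert {a : I} {S : Finset I} (ha : a ∉ S) :
    mobiusCoeff Q (insert a S) = mobiusCoeff (fun w => Q (update w a 1) - Q (update w a 0)) S := by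
  rw [mobiusCoeff, mobiusCoeff, sum_powerset_insert ha, ← sum_add_distrib]
  refine sum_congr rfl fun T hT => ?_
  have haT : a ∉ T := fun h => ha (mem_powerset.mp hT h)
  rw [insert_sdiff_of_notMem _ haT, card_insert_of_notMem fun h => ha (mem_sdiff.mp h).1,
    insert_sdiff_insert, sdiff_insert_of_notMem ha, piecewise_insert, Pi.one_apply, pow_succ,
    show update (T.piecewise 1 0 : I → ℝ) a 0 = (T.piecewise 1 0 : I → ℝ) by simp [haT]]
  ring

lemma IsMultiAffine.eq_sum_powerset_of_support (hQ : IsMultiAffine Q) (U : Finset I)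
    (w : I → ℝ) (hw : ∀ j ∉ U, w j = 0) :
    Q w = ∑ S ∈ U.powerset, mobiusCoeff Q S * ∏ j ∈ S, w j := by
  induction U using Finset.induction_on generalizing Q w with
  | empty =>
    obtain rfl : w = 0 := funext fun j => hw j (notMem_empty j)
    simp [mobiusCoeff]
  | insert a U ha ih =>
    have hw₀ : ∀ j ∉ U, update w a 0 j = 0 := by
      intro j hj
      by_cases hja : j = a
      · simp [hja]
      · rw [update_of_ne hja]
        exact hw j (by simp [hja, hj])
    have hD := ih (hQ.update_one_sub_update_zero a) (update w a 0) hw₀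
    simp only [update_idem] at hD
    rw [hQ.apply_eq_update_zero_add w a, hD, ih hQ _ hw₀, sum_powerset_insert ha, mul_sum]
    congr 1 <;> refine sum_congr rfl fun S hS => ?_
    all_goals have haS : a ∉ S := fun h => ha (mem_powerset.mp hS h)
    · rw [prod_update_of_notMem haS]
    · rw [prod_update_of_notMem haS, mobiusCoeff_insert haS, prod_insert haS]
      ring

theorem IsMultiAffine.eq_sum_mobiusCoeff [Fintype I] (hQ : IsMultiAffine Q) (w : I → ℝ) :
    Q w = ∑ S, mobiusCoeff Q S * ∏ j ∈ S, w j := by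
  simpa using hQ.eq_sum_powerset_of_support univ w (by simp)

lemma mobiusCoeff_map_perm (σ : Equiv.Perm I) (hσ : ∀ w, Q (w ∘ σ) = Q w) (S : Finset I) :
    mobiusCoeff Q (S.map σ.toEmbedding) = mobiusCoeff Q S := by
  symm
  refine sum_nbij' (·.map σ.toEmbedding) (·.map σ.symm.toEmbedding) ?_ ?_ ?_ ?_ ?_
  · intro T hT
    simpa using hT
  · intro T hT
    simpa [map_map] using (map_subset_map (f := σ.symm.toEmbedding)).mpr (mem_powerset.mp hT)
  · intro T _
    simp [map_map]
  · intro T _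
    simp [map_map]
  · intro T _
    rw [← Finset.map_sdiff, card_map, ← hσ ((T.map σ.toEmbedding).piecewise 1 0)]
    congr 2
    ext j
    simp [Finset.piecewise]

end MultiAffine

lemma sum_mul_eq_sum_mul_inv_card_mul_sum {α K : Type*} [Field K] [CharZero K] {s : Finset α}
    {a b : α → K} (ha : ∀ x ∈ s, ∀ y ∈ s, a x = a y) :
    ∑ x ∈ s, a x * b x = (∑ x ∈ s, a x) * ((#s : K)⁻¹ * ∑ x ∈ s, b x) := by
  rcases s.eq_empty_or_nonempty with rfl | ⟨x₀, hx₀⟩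
  · simp
  have hconst : ∀ x ∈ s, a x = a x₀ := fun x hx => ha x hx x₀ hx₀
  have hs : (#s : K) ≠ 0 := Nat.cast_ne_zero.mpr (card_ne_zero_of_mem hx₀)
  rw [sum_congr rfl fun x hx => congrArg (· * b x) (hconst x hx), sum_congr rfl hconst, sum_const,
    nsmul_eq_mul, ← mul_sum]
  field_simp

theorem eq_of_forall_sum_mul_prod_pow_eq {σ M : Type*} [Fintype σ] [Fintype M] {e : M → σ → ℕ}
    (he : Injective e) {a b : M → ℝ}
    (h : ∀ x : σ → ℝ, ∑ m, a m * ∏ k, x k ^ e m k = ∑ m, b m * ∏ k, x k ^ e m k) : a = b := by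
  classical
  let E : M → σ →₀ ℕ := fun m => Finsupp.equivFunOnFinite.symm (e m)
  have hE : Injective E := Finsupp.equivFunOnFinite.symm.injective.comp he
  let P : (M → ℝ) → MvPolynomial σ ℝ := fun g => ∑ m, MvPolynomial.monomial (E m) (g m)
  have heval (g : M → ℝ) (x : σ → ℝ) : (P g).eval x = ∑ m, g m * ∏ k, x k ^ e m k := by
    simp [P, E, MvPolynomial.eval_monomial, Finsupp.prod_fintype]
  have hcoeff (g : M → ℝ) (m : M) : (P g).coeff (E m) = g m := by
    simp [P, MvPolynomial.coeff_sum, MvPolynomial.coeff_monomial, hE.eq_iff]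
  have hP : P a = P b := MvPolynomial.funext fun x => by rw [heval, heval, h]
  funext m
  rw [← hcoeff a m, hP, hcoeff]

section Blocks

variable {ι : Type*} [Fintype ι] [DecidableEq ι]

lemma sum_finset_sigma_eq_sum_pi {β : ι → Type*} [∀ i, Fintype (β i)] [∀ i, DecidableEq (β i)]
    {M : Type*} [AddCommMonoid M] (F : Finset (Σ i, β i) → M) :
    ∑ S, F S = ∑ f : ∀ i, Finset (β i), F (univ.sigma f) := by
  let e : (∀ i, Finset (β i)) ≃ Finset (Σ i, β i) :=
    { toFun f := univ.sigma f
      invFun S i := S.preimage (Sigma.mk i) sigma_mk_injective.injOn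
      left_inv f := by ext; simp
      right_inv S := by ext ⟨i, b⟩; simp }
  exact (Fintype.sum_equiv e _ _ fun _ => rfl).symm

variable {d : ι → ℕ}

lemma sum_eq_sum_sum_piFinset_powersetCard {M : Type*} [AddCommMonoid M]
    (F : (∀ k, Finset (Fin (d k))) → M) :
    ∑ f, F f = ∑ m : ∀ k, Fin (d k + 1), ∑ f ∈ piFinset fun k => powersetCard (m k) univ, F f := by
  let cardVec (f : ∀ k, Finset (Fin (d k))) : ∀ k, Fin (d k + 1) :=
    fun k => ⟨#(f k), Nat.lt_succ_of_le ((card_le_univ _).trans_eq (Fintype.card_fin _))⟩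
  rw [← sum_fiberwise univ cardVec F]
  refine sum_congr rfl fun m _ => sum_congr ?_ fun _ _ => rfl
  ext f
  simp [cardVec, funext_iff, Fin.ext_iff]

lemma card_piFinset_powersetCard (m : ι → ℕ) :
    #(piFinset fun k => powersetCard (m k) (univ : Finset (Fin (d k)))) =
      ∏ k, (d k).choose (m k) := by
  simp

lemma prod_normEsymm (m : ι → ℕ) (z : ∀ k, Fin (d k) → ℝ) :
    ∏ k, normEsymm (d k) (m k) (z k) = (∏ k, ((d k).choose (m k) : ℝ))⁻¹ *
      ∑ f ∈ piFinset fun k => powersetCard (m k) univ, ∏ k, ∏ i ∈ f k, z k i := by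
  rw [← prod_univ_sum (fun k => powersetCard (m k) univ) fun k s => ∏ i ∈ s, z k i,
    ← prod_inv_distrib, ← prod_mul_distrib]
  rfl

end Blocks

section Blossom

variable {n : ℕ} {δ : Fin n → ℕ} {q' : (∀ k, Fin (δ k) → ℝ) → ℝ}

lemma MultiAffineB.isMultiAffine_comp_curry (h : MultiAffineB δ q') :
    IsMultiAffine fun w : (Σ k, Fin (δ k)) → ℝ => q' (Sigma.curry w) := by
  rintro ⟨k, i⟩ w s t θ
  simp only [Sigma.curry_update]
  exact h k i (Sigma.curry w) s t θ

variable (q') in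
def blockCoeff (f : ∀ k, Finset (Fin (δ k))) : ℝ :=
  mobiusCoeff (fun w => q' (Sigma.curry w)) (univ.sigma f)

lemma MultiAffineB.eq_sum_blockCoeff (h : MultiAffineB δ q') (z : ∀ k, Fin (δ k) → ℝ) :
    q' z = ∑ f, blockCoeff q' f * ∏ k, ∏ i ∈ f k, z k i := by
  have := h.isMultiAffine_comp_curry.eq_sum_mobiusCoeff (Sigma.uncurry z)
  rw [sum_finset_sigma_eq_sum_pi] at this
  simp only [prod_sigma] at this
  exact this

lemma blockCoeff_eq_of_card_eq (h : ∀ z z' : ∀ k, Fin (δ k) → ℝ, BlockRel δ z z' → q' z = q' z')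
    {f g : ∀ k, Finset (Fin (δ k))} (hfg : ∀ k, #(f k) = #(g k)) :
    blockCoeff q' f = blockCoeff q' g := by
  choose π hπ using fun k => Equiv.Perm.exists_map_finset_eq (f k) (g k) (hfg k)
  have hmap : (univ.sigma f).map (Equiv.sigmaCongrRight π).toEmbedding = univ.sigma g := by
    ext ⟨k, i⟩
    simp [← hπ k, Finset.mem_map_equiv]
  rw [blockCoeff, blockCoeff, ← hmap, mobiusCoeff_map_perm]
  exact fun w => h _ _ fun k => ⟨π k, fun i => rfl⟩

lemma MultiAffineB.apply_diag (h : MultiAffineB δ q') (x : Fin n → ℝ) :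
    q' (fun k _ => x k) = ∑ m : ∀ k, Fin (δ k + 1),
      (∑ f ∈ piFinset fun k => powersetCard (m k) univ, blockCoeff q' f) *
        ∏ k, x k ^ (m k : ℕ) := by
  rw [h.eq_sum_blockCoeff, sum_eq_sum_sum_piFinset_powersetCard]
  refine sum_congr rfl fun m _ => ?_
  rw [sum_mul]
  refine sum_congr rfl fun f hf => ?_
  simp only [mem_piFinset, mem_powersetCard] at hf
  simp [hf]

end Blossom

theorem stmt_4_general {n : ℕ} (δ : Fin n → ℕ)
    (c : (∀ k, Fin (δ k + 1)) → ℝ)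
    (q' : (∀ k, Fin (δ k) → ℝ) → ℝ)
    (h1 : MultiAffineB δ q')
    (h2 : ∀ z z' : ∀ k, Fin (δ k) → ℝ, BlockRel δ z z' → q' z = q' z')
    (h3 : ∀ x : Fin n → ℝ, q' (fun k _ => x k) = polyOf c x) :
    q' = blossomOf c := by
  have hcoeff : ∀ m, ∑ f ∈ piFinset (fun k => powersetCard (m k) univ), blockCoeff q' f = c m :=
    congrFun <| eq_of_forall_sum_mul_prod_pow_eq
      (fun m m' h => funext fun k => Fin.ext (congrFun h k))
      fun x => (h1.apply_diag x).symm.trans (h3 x)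
  funext z
  rw [h1.eq_sum_blockCoeff, sum_eq_sum_sum_piFinset_powersetCard, blossomOf]
  refine sum_congr rfl fun m _ => ?_
  rw [prod_normEsymm, ← hcoeff m, ← Nat.cast_prod, ← card_piFinset_powersetCard]
  refine sum_mul_eq_sum_mul_inv_card_mul_sum fun f hf g hg =>
    blockCoeff_eq_of_card_eq h2 fun k => ?_
  simp only [mem_piFinset, mem_powersetCard] at hf hg
  rw [(hf k).2, (hg k).2]

/-- The blossom is the unique symmetric multi-affine function with the diagonal
property: any `q'` which is (1) multi-affine in each argument, (2) symmetric within
each block, and (3) agrees with `p` on the diagonal, equals the blossom of `p`. -/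
theorem stmt_4 {n : ℕ} (δ : Fin n → ℕ) (hδ : ∀ k, 1 ≤ δ k)
    (c : (∀ k, Fin (δ k + 1)) → ℝ)
    (q' : (∀ k, Fin (δ k) → ℝ) → ℝ)
    (h1 : MultiAffineB δ q')
    (h2 : ∀ z z' : ∀ k, Fin (δ k) → ℝ, BlockRel δ z z' → q' z = q' z')
    (h3 : ∀ x : Fin n → ℝ, q' (fun k _ => x k) = polyOf c x) :
    q' = blossomOf c :=
  stmt_4_general δ c q' h1 h2 h3
end

section
/- The values of the blossom at the equivalence classes of vertices are the coordinates of p in the tensor-product Bernstein basis: for all x = (x_1,…,x_n) ∈ ℝ^n, p(x) = Σ_{v̄∈V̄'} q(v̄) ∏_{k=1}^{n} 𝓑_{l_k(v̄),δ_k}((x_k − x̲_k)/(x̄_k − x̲_k)), where 𝓑_{l,δ}(y) = binom(δ,l) y^l (1−y)^{δ−l} are the Bernstein polynomials. -/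
open Finset

/-- The canonical representative of the equivalence class of vertices of
`R' = ∏_k [lo k, hi k]^{δ k}` whose `k`-th block has exactly `ℓ k` coordinates
equal to `hi k` (and the rest equal to `lo k`). -/
noncomputable def vrep {n : ℕ} (δ : Fin n → ℕ) (lo hi : Fin n → ℝ)
    (ℓ : ∀ k, Fin (δ k + 1)) (k : Fin n) (i : Fin (δ k)) : ℝ :=
  if (i : ℕ) < (ℓ k : ℕ) then hi k else lo k

/-- The Bernstein polynomial `𝓑_{l,δ}(y) = binom(δ,l) y^l (1-y)^{δ-l}`. -/
noncomputable def bern (δ l : ℕ) (y : ℝ) : ℝ :=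
  (δ.choose l : ℝ) * y ^ l * (1 - y) ^ (δ - l)

/-! Everything factors over the coordinates, so it suffices to prove the univariate identity
`∑_j B_{l,δ}(v_j) 𝓑_{j,δ}(y) = (y hi + (1 - y) lo)^l`, where `v_j` has `j` entries `hi` and
`δ - j` entries `lo`. Let `T` be a random subset of the `δ` indices, each index chosen
independently with probability `y`, and let `v_T` be `hi` on `T` and `lo` off it. Then
`𝓑_{j,δ}(y)` is the probability that `#T = j`, and `e_l(v_T)` depends only on `#T`, so the left
side is the expectation of `B_{l,δ}(v_T)`. Each of the `binom(δ,l)` monomials of `e_l(v_T)` is a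
product of `l` independent factors of mean `y hi + (1 - y) lo`. -/

section Vertex

variable {ι : Type*} [Fintype ι] [DecidableEq ι]

lemma map_univ_ite_mem (T : Finset ι) (a b : ℝ) :
    univ.val.map (fun i => if i ∈ T then a else b)
      = Multiset.replicate #T a + Multiset.replicate (Fintype.card ι - #T) b := by
  rw [← Multiset.filter_add_not (· ∈ T) univ.val, Multiset.map_add]
  congr 1 <;> rw [Multiset.eq_replicate] <;> refine ⟨?_, ?_⟩
  · simp [← Finset.filter_val]
  · simp +contextual
  · simp [← Finset.filter_val, Finset.filter_not]
  · simp +contextual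

lemma sum_bernoulli_mul_prod_ite_mem (S : Finset ι) (y a b : ℝ) :
    ∑ T : Finset ι, y ^ #T * (1 - y) ^ (Fintype.card ι - #T) *
        ∏ i ∈ S, (if i ∈ T then a else b)
      = (y * a + (1 - y) * b) ^ #S := by
  have hfactor : ∀ i, y * (if i ∈ S then a else 1) + (1 - y) * (if i ∈ S then b else 1)
      = if i ∈ S then y * a + (1 - y) * b else 1 := by
    intro i; split_ifs <;> ring
  rw [← prod_const, ← Fintype.prod_ite_mem, ← Fintype.prod_congr _ _ hfactor, Fintype.prod_add]
  refine Fintype.sum_congr _ _ fun T => ?_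
  rw [prod_mul_distrib, prod_mul_distrib, prod_const, prod_const, card_compl, prod_ite_mem,
    prod_ite_mem, prod_ite, filter_mem_eq_inter, filter_not, filter_mem_eq_inter,
    sdiff_inter_self_left, sdiff_eq_inter_compl, inter_comm T S, inter_comm Tᶜ S]
  ring

lemma sum_bernoulli_mul_esymm (l : ℕ) (y a b : ℝ) :
    ∑ T : Finset ι, y ^ #T * (1 - y) ^ (Fintype.card ι - #T) *
        (univ.val.map fun i => if i ∈ T then a else b).esymm l
      = (Fintype.card ι).choose l * (y * a + (1 - y) * b) ^ l := by
  simp_rw [Finset.esymm_map_val, mul_sum]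
  rw [sum_comm, sum_congr rfl fun S hS => by
      rw [sum_bernoulli_mul_prod_ite_mem, (mem_powersetCard.mp hS).2],
    sum_const, card_powersetCard, card_univ, nsmul_eq_mul]

end Vertex

lemma sum_bern_mul_esymm_replicate (d l : ℕ) (y a b : ℝ) :
    ∑ j ∈ range (d + 1), bern d j y * (Multiset.replicate j a + Multiset.replicate (d - j) b).esymm l
      = d.choose l * (y * a + (1 - y) * b) ^ l := by
  have h := sum_bernoulli_mul_esymm (ι := Fin d) l y a b
  simp_rw [map_univ_ite_mem, Fintype.card_fin] at h
  rw [← h, ← powerset_univ, sum_powerset, card_univ, Fintype.card_fin]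
  refine sum_congr rfl fun j _ => ?_
  rw [sum_powersetCard j univ fun m =>
      y ^ m * (1 - y) ^ (d - m) * (Multiset.replicate m a + Multiset.replicate (d - m) b).esymm l,
    card_univ, Fintype.card_fin, nsmul_eq_mul, bern]
  ring

lemma map_univ_ite_val_lt {d j : ℕ} (hj : j ≤ d) (a b : ℝ) :
    univ.val.map (fun i : Fin d => if (i : ℕ) < j then a else b)
      = Multiset.replicate j a + Multiset.replicate (d - j) b := by
  have h : (fun i : Fin d => if (i : ℕ) < j then a else b)
      = fun i => if i ∈ ({i | (i : ℕ) < j} : Finset (Fin d)) then a else b := by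
    simp
  rw [h, map_univ_ite_mem, Fin.card_filter_val_lt, min_eq_right hj, Fintype.card_fin]

lemma normEsymm_eq_inv_choose_mul_esymm (d l : ℕ) (z : Fin d → ℝ) :
    normEsymm d l z = (d.choose l : ℝ)⁻¹ * (univ.val.map z).esymm l := by
  rw [normEsymm, Finset.esymm_map_val]

lemma sum_normEsymm_mul_bern {d l : ℕ} (hl : l ≤ d) (y a b : ℝ) :
    ∑ j : Fin (d + 1), normEsymm d l (fun i => if (i : ℕ) < j then a else b) * bern d j y
      = (y * a + (1 - y) * b) ^ l := by
  have hchoose : (d.choose l : ℝ) ≠ 0 := Nat.cast_ne_zero.mpr (Nat.choose_pos hl).ne'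
  rw [Fin.sum_univ_eq_sum_range
      (fun j => normEsymm d l (fun i => if (i : ℕ) < j then a else b) * bern d j y),
    sum_congr rfl fun j hj => by
      rw [normEsymm_eq_inv_choose_mul_esymm,
        map_univ_ite_val_lt (Nat.lt_succ_iff.mp (mem_range.mp hj)), mul_right_comm, mul_assoc],
    ← mul_sum, sum_bern_mul_esymm_replicate, inv_mul_cancel_left₀ hchoose]

theorem stmt_5_general {n : ℕ} (δ : Fin n → ℕ)
    (lo hi : Fin n → ℝ) (hlt : ∀ k, lo k < hi k)
    (c : (∀ k, Fin (δ k + 1)) → ℝ) :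
    ∀ x : Fin n → ℝ,
      polyOf c x = ∑ ℓ : ∀ k, Fin (δ k + 1),
        blossomOf c (vrep δ lo hi ℓ) *
          ∏ k, bern (δ k) (ℓ k) ((x k - lo k) / (hi k - lo k)) := by
  intro x
  have hcoord : ∀ k, (x k - lo k) / (hi k - lo k) * hi k
      + (1 - (x k - lo k) / (hi k - lo k)) * lo k = x k := fun k => by
    field_simp [sub_ne_zero.mpr (hlt k).ne']
    ring
  simp only [polyOf, blossomOf, sum_mul, mul_assoc, ← prod_mul_distrib]
  rw [sum_comm]
  refine sum_congr rfl fun l _ => ?_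
  rw [← mul_sum]
  congr 1
  refine (prod_congr rfl fun k _ => ?_).trans (Fintype.prod_sum fun k (j : Fin (δ k + 1)) =>
    normEsymm (δ k) (l k) (fun i => if (i : ℕ) < j then hi k else lo k) *
      bern (δ k) j ((x k - lo k) / (hi k - lo k)))
  rw [sum_normEsymm_mul_bern (l k).is_le, hcoord]

/-- The values of the blossom at the equivalence classes of vertices of
`R' = ∏_k [lo k, hi k]^{δ k}` (represented by `vrep δ lo hi ℓ`, where `ℓ k = l_k(v̄)`)
are the coordinates of `p` in the tensor-product Bernstein basis:
`p x = ∑_{v̄} q(v̄) ∏_k 𝓑_{l_k(v̄),δ_k}((x_k − lo_k)/(hi_k − lo_k))`. -/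
theorem stmt_5 {n : ℕ} (δ : Fin n → ℕ) (hδ : ∀ k, 1 ≤ δ k)
    (lo hi : Fin n → ℝ) (hlt : ∀ k, lo k < hi k)
    (c : (∀ k, Fin (δ k + 1)) → ℝ) :
    ∀ x : Fin n → ℝ,
      polyOf c x = ∑ ℓ : ∀ k, Fin (δ k + 1),
        blossomOf c (vrep δ lo hi ℓ) *
          ∏ k, bern (δ k) (ℓ k) ((x k - lo k) / (hi k - lo k)) :=
  stmt_5_general δ lo hi hlt c
end

section
/- For a multi-affine objective, the Lagrangian dual of the polytopic optimization problem is equivalent to a linear program over the vertices: sup over λ ∈ ℝ^{m_I} with λ_i ≥ 0 and μ ∈ ℝ^{m_J} of inf_{x∈R} L(x,λ,μ) equals sup of { t ∈ ℝ : there exist λ ∈ ℝ^{m_I}, μ ∈ ℝ^{m_J} with λ_i ≥ 0 for all i ∈ I and t ≤ p(v) + Σ_{i∈I} λ_i(a_i·v − b_i) + Σ_{j∈J} μ_j(c_j·v − d_j) for all v ∈ V }. -/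
/-- A function `p : ℝ^n → ℝ` is multi-affine if it is a polynomial of degree at most 1
in each variable. -/
def MultiAffine {n : ℕ} (p : (Fin n → ℝ) → ℝ) : Prop :=
  ∃ c : (Fin n → Bool) → ℝ,
    ∀ x : Fin n → ℝ, p x = ∑ l : Fin n → Bool, c l * ∏ k, (if l k then x k else 1)

/-- Euclidean dot product on `ℝ^n`. -/
def dotp {n : ℕ} (u x : Fin n → ℝ) : ℝ := ∑ k, u k * x k

/-- `q` is affine in each coordinate. -/
def AffIn {n : ℕ} (q : (Fin n → ℝ) → ℝ) : Prop :=
  ∀ (k : Fin n) (x : Fin n → ℝ) (s : ℝ),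
    q (Function.update x k s)
      = q (Function.update x k 0)
        + s * (q (Function.update x k 1) - q (Function.update x k 0))

lemma affIn_multiAffine {n : ℕ} {p : (Fin n → ℝ) → ℝ} (hp : MultiAffine p) : AffIn p := by
  obtain ⟨c, hc⟩ := hp
  intro k x s
  have key : ∀ (t : ℝ) (l : Fin n → Bool),
      (∏ j, (if l j then Function.update x k t j else 1))
        = (if l k then t else 1) * ∏ j ∈ Finset.univ.erase k, (if l j then x j else 1) := by
    intro t l
    rw [← Finset.mul_prod_erase Finset.univ _ (Finset.mem_univ k)]
    congr 1
    · simp [Function.update_self]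
    · refine Finset.prod_congr rfl fun j hj => ?_
      rw [Function.update_of_ne (Finset.ne_of_mem_erase hj)]
  have hform : ∀ t : ℝ, p (Function.update x k t)
      = ∑ l : Fin n → Bool,
          c l * ((if l k then t else 1) * ∏ j ∈ Finset.univ.erase k, (if l j then x j else 1)) := by
    intro t
    rw [hc]
    exact Finset.sum_congr rfl fun l _ => by rw [key]
  simp only [hform]
  rw [← Finset.sum_sub_distrib, Finset.mul_sum, ← Finset.sum_add_distrib]
  refine Finset.sum_congr rfl fun l _ => ?_
  by_cases h : l k <;> simp [h] <;> ring

lemma AffIn.add {n : ℕ} {q r : (Fin n → ℝ) → ℝ} (hq : AffIn q) (hr : AffIn r) :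
    AffIn (fun x => q x + r x) := by
  intro k x s
  simp only
  rw [hq, hr]
  ring

lemma affIn_sum {n : ℕ} {ι : Type*} [Fintype ι] {f : ι → (Fin n → ℝ) → ℝ}
    (h : ∀ i, AffIn (f i)) : AffIn (fun x => ∑ i, f i x) := by
  intro k x s
  simp only
  rw [Finset.sum_congr rfl fun i _ => h i k x s]
  rw [← Finset.sum_sub_distrib, Finset.mul_sum, ← Finset.sum_add_distrib]

lemma affIn_linear {n : ℕ} (u : Fin n → ℝ) (e r : ℝ) :
    AffIn (fun x => r * (dotp u x - e)) := by
  intro k x s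
  have hd : ∀ t : ℝ, dotp u (Function.update x k t) = dotp u x + u k * (t - x k) := by
    intro t
    have h1 : ∀ j, u j * Function.update x k t j
        = u j * x j + (if j = k then u k * (t - x k) else 0) := by
      intro j
      by_cases h : j = k
      · subst h; simp [Function.update_self]; ring
      · simp [Function.update_of_ne h, h]
    simp only [dotp, h1, Finset.sum_add_distrib, Finset.sum_ite_eq', Finset.mem_univ, if_pos]
  simp only [hd]
  ring

lemma exists_vertex_le {n : ℕ} (lo hi : Fin n → ℝ) (hle : ∀ k, lo k ≤ hi k)
    {q : (Fin n → ℝ) → ℝ} (hq : AffIn q) (s : Finset (Fin n)) :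
    ∀ x : Fin n → ℝ, (∀ k, x k ∈ Set.Icc (lo k) (hi k)) →
      (∀ k, k ∉ s → x k = lo k ∨ x k = hi k) →
      ∃ v, (∀ k, v k = lo k ∨ v k = hi k) ∧ q v ≤ q x := by
  classical
  induction s using Finset.induction_on with
  | empty =>
    intro x hx h
    exact ⟨x, fun k => h k (by simp), le_rfl⟩
  | @insert k s' hk ih =>
    intro x hx hout
    have haff : ∀ t : ℝ, q (Function.update x k t)
        = q (Function.update x k 0)
          + t * (q (Function.update x k 1) - q (Function.update x k 0)) := fun t => hq k x t
    have hxk := hx k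
    have hxeq : q (Function.update x k (x k)) = q x := by rw [Function.update_eq_self]
    have hkey : ∃ e, (e = lo k ∨ e = hi k) ∧ q (Function.update x k e) ≤ q x := by
      rcases le_or_gt 0 (q (Function.update x k 1) - q (Function.update x k 0)) with hb | hb
      · refine ⟨lo k, Or.inl rfl, ?_⟩
        rw [← hxeq, haff (lo k), haff (x k)]
        nlinarith [hxk.1]
      · refine ⟨hi k, Or.inr rfl, ?_⟩
        rw [← hxeq, haff (hi k), haff (x k)]
        nlinarith [hxk.2]
    obtain ⟨e, he, hqe⟩ := hkey
    obtain ⟨v, hv, hqv⟩ := ih (Function.update x k e)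
      (by
        intro j
        by_cases hj : j = k
        · subst hj
          rcases he with h | h <;> rw [Function.update_self, h]
          · exact ⟨le_rfl, hle j⟩
          · exact ⟨hle j, le_rfl⟩
        · rw [Function.update_of_ne hj]; exact hx j)
      (by
        intro j hj
        by_cases hjk : j = k
        · subst hjk; rw [Function.update_self]; exact he
        · rw [Function.update_of_ne hjk]
          exact hout j (by simp [hjk, hj]))
    exact ⟨v, hv, hqv.trans hqe⟩

/-- For a multi-affine objective `p`, the Lagrangian dual of the problem
"minimize `p x` over `x ∈ R` subject to `aᵢ·x ≤ bᵢ` and `cⱼ·x = dⱼ`" — i.e.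
`sup_{λ ≥ 0, μ} inf_{x ∈ R} L(x,λ,μ)` — equals the optimal value of the linear
program `sup { t | ∃ λ ≥ 0, μ, ∀ v ∈ V, t ≤ p v + ∑ᵢ λᵢ(aᵢ·v − bᵢ) + ∑ⱼ μⱼ(cⱼ·v − dⱼ) }`
over the vertex set `V` of the rectangle `R`. -/
theorem stmt_6 {n mI mJ : ℕ} (lo hi : Fin n → ℝ) (hlt : ∀ k, lo k < hi k)
    (p : (Fin n → ℝ) → ℝ) (hp : MultiAffine p)
    (a : Fin mI → Fin n → ℝ) (b : Fin mI → ℝ)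
    (c : Fin mJ → Fin n → ℝ) (d : Fin mJ → ℝ)
    (hfeas : ∃ x : Fin n → ℝ, (∀ k, x k ∈ Set.Icc (lo k) (hi k)) ∧
      (∀ i, dotp (a i) x ≤ b i) ∧ (∀ j, dotp (c j) x = d j)) :
    sSup {D : ℝ | ∃ (lam : Fin mI → ℝ) (mu : Fin mJ → ℝ), (∀ i, 0 ≤ lam i) ∧
        D = sInf {y : ℝ | ∃ x : Fin n → ℝ, (∀ k, x k ∈ Set.Icc (lo k) (hi k)) ∧
          y = p x + ∑ i, lam i * (dotp (a i) x - b i)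
              + ∑ j, mu j * (dotp (c j) x - d j)}}
    = sSup {t : ℝ | ∃ (lam : Fin mI → ℝ) (mu : Fin mJ → ℝ), (∀ i, 0 ≤ lam i) ∧
        ∀ v : Fin n → ℝ, (∀ k, v k = lo k ∨ v k = hi k) →
          t ≤ p v + ∑ i, lam i * (dotp (a i) v - b i)
              + ∑ j, mu j * (dotp (c j) v - d j)} := by
  classical
  have hle : ∀ k, lo k ≤ hi k := fun k => (hlt k).le
  set q : (Fin mI → ℝ) → (Fin mJ → ℝ) → (Fin n → ℝ) → ℝ := fun lam mu x =>
    p x + ∑ i, lam i * (dotp (a i) x - b i) + ∑ j, mu j * (dotp (c j) x - d j) with hqdef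
  have hq : ∀ lam mu, AffIn (q lam mu) := fun lam mu =>
    AffIn.add (AffIn.add (affIn_multiAffine hp)
      (affIn_sum fun i => affIn_linear (a i) (b i) (lam i)))
      (affIn_sum fun j => affIn_linear (c j) (d j) (mu j))
  -- vertices
  set vert : (Fin n → Bool) → Fin n → ℝ := fun l k => if l k then hi k else lo k with hvdef
  have hvV : ∀ l k, vert l k = lo k ∨ vert l k = hi k := by
    intro l k; by_cases h : l k <;> simp [hvdef, h]
  have hvR : ∀ l k, vert l k ∈ Set.Icc (lo k) (hi k) := by
    intro l k
    rcases hvV l k with h | h <;> rw [h]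
    · exact ⟨le_rfl, hle k⟩
    · exact ⟨hle k, le_rfl⟩
  have hsurj : ∀ v : Fin n → ℝ, (∀ k, v k = lo k ∨ v k = hi k) → ∃ l, vert l = v := by
    intro v hv
    refine ⟨fun k => if v k = hi k then true else false, funext fun k => ?_⟩
    by_cases h : v k = hi k
    · simp [hvdef, h]
    · simp [hvdef, h, (hv k).resolve_right h]
      exact fun h' => h'.symm
  have hne : (Finset.univ : Finset (Fin n → Bool)).Nonempty := Finset.univ_nonempty
  set M : (Fin mI → ℝ) → (Fin mJ → ℝ) → ℝ := fun lam mu =>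
    Finset.univ.inf' hne (fun l => q lam mu (vert l)) with hMdef
  have hMlb : ∀ lam mu (x : Fin n → ℝ), (∀ k, x k ∈ Set.Icc (lo k) (hi k)) →
      M lam mu ≤ q lam mu x := by
    intro lam mu x hx
    obtain ⟨v, hv, hvle⟩ := exists_vertex_le lo hi hle (hq lam mu) Finset.univ x hx
      (fun k hk => absurd (Finset.mem_univ k) hk)
    obtain ⟨l, rfl⟩ := hsurj v hv
    exact (Finset.inf'_le _ (Finset.mem_univ l)).trans hvle
  have hMmem : ∀ lam mu, ∃ l, M lam mu = q lam mu (vert l) := by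
    intro lam mu
    obtain ⟨l, _, hl⟩ := Finset.exists_mem_eq_inf' hne (fun l => q lam mu (vert l))
    exact ⟨l, hl⟩
  have hInf : ∀ lam mu,
      sInf {y : ℝ | ∃ x : Fin n → ℝ, (∀ k, x k ∈ Set.Icc (lo k) (hi k)) ∧
          y = p x + ∑ i, lam i * (dotp (a i) x - b i)
              + ∑ j, mu j * (dotp (c j) x - d j)} = M lam mu := by
    intro lam mu
    have hset : {y : ℝ | ∃ x : Fin n → ℝ, (∀ k, x k ∈ Set.Icc (lo k) (hi k)) ∧
          y = p x + ∑ i, lam i * (dotp (a i) x - b i)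
              + ∑ j, mu j * (dotp (c j) x - d j)}
        = {y : ℝ | ∃ x : Fin n → ℝ, (∀ k, x k ∈ Set.Icc (lo k) (hi k)) ∧ y = q lam mu x} := rfl
    rw [hset]
    have hbdd : BddBelow {y : ℝ | ∃ x : Fin n → ℝ,
        (∀ k, x k ∈ Set.Icc (lo k) (hi k)) ∧ y = q lam mu x} :=
      ⟨M lam mu, fun y ⟨x, hx, hy⟩ => hy ▸ hMlb lam mu x hx⟩
    obtain ⟨l, hl⟩ := hMmem lam mu
    apply le_antisymm
    · exact csInf_le hbdd ⟨vert l, fun k => hvR l k, hl⟩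
    · exact le_csInf ⟨q lam mu (vert l), vert l, fun k => hvR l k, rfl⟩
        (fun y ⟨x, hx, hy⟩ => hy ▸ hMlb lam mu x hx)
  -- rewrite both sets
  have hS1 : {D : ℝ | ∃ (lam : Fin mI → ℝ) (mu : Fin mJ → ℝ), (∀ i, 0 ≤ lam i) ∧
        D = sInf {y : ℝ | ∃ x : Fin n → ℝ, (∀ k, x k ∈ Set.Icc (lo k) (hi k)) ∧
          y = p x + ∑ i, lam i * (dotp (a i) x - b i)
              + ∑ j, mu j * (dotp (c j) x - d j)}}
      = {D : ℝ | ∃ (lam : Fin mI → ℝ) (mu : Fin mJ → ℝ), (∀ i, 0 ≤ lam i) ∧ D = M lam mu} := by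
    ext D
    constructor
    · rintro ⟨lam, mu, hlam, hD⟩; exact ⟨lam, mu, hlam, by rw [hD, hInf]⟩
    · rintro ⟨lam, mu, hlam, hD⟩; exact ⟨lam, mu, hlam, by rw [hD, hInf]⟩
  have hS2 : {t : ℝ | ∃ (lam : Fin mI → ℝ) (mu : Fin mJ → ℝ), (∀ i, 0 ≤ lam i) ∧
        ∀ v : Fin n → ℝ, (∀ k, v k = lo k ∨ v k = hi k) →
          t ≤ p v + ∑ i, lam i * (dotp (a i) v - b i)
              + ∑ j, mu j * (dotp (c j) v - d j)}
      = {t : ℝ | ∃ (lam : Fin mI → ℝ) (mu : Fin mJ → ℝ), (∀ i, 0 ≤ lam i) ∧ t ≤ M lam mu} := by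
    ext t
    constructor
    · rintro ⟨lam, mu, hlam, ht⟩
      obtain ⟨l, hl⟩ := hMmem lam mu
      exact ⟨lam, mu, hlam, hl ▸ ht (vert l) (hvV l)⟩
    · rintro ⟨lam, mu, hlam, ht⟩
      refine ⟨lam, mu, hlam, fun v hv => ?_⟩
      obtain ⟨l, rfl⟩ := hsurj v hv
      exact ht.trans (Finset.inf'_le _ (Finset.mem_univ l))
  rw [hS1, hS2]
  -- final comparison of sups
  set S1 := {D : ℝ | ∃ (lam : Fin mI → ℝ) (mu : Fin mJ → ℝ), (∀ i, 0 ≤ lam i) ∧ D = M lam mu}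
  set S2 := {t : ℝ | ∃ (lam : Fin mI → ℝ) (mu : Fin mJ → ℝ), (∀ i, 0 ≤ lam i) ∧ t ≤ M lam mu}
  have hsub : S1 ⊆ S2 := by
    rintro D ⟨lam, mu, hlam, hD⟩; exact ⟨lam, mu, hlam, hD.le⟩
  have hdom : ∀ t ∈ S2, ∃ D ∈ S1, t ≤ D := by
    rintro t ⟨lam, mu, hlam, ht⟩; exact ⟨M lam mu, ⟨lam, mu, hlam, rfl⟩, ht⟩
  have hne1 : S1.Nonempty := ⟨M (fun _ => 0) (fun _ => 0), fun _ => 0, fun _ => 0,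
    fun _ => le_rfl, rfl⟩
  by_cases hB : BddAbove S1
  · have hB2 : BddAbove S2 := by
      obtain ⟨u, hu⟩ := hB
      exact ⟨u, fun t ht => by obtain ⟨D, hD, htD⟩ := hdom t ht; exact htD.trans (hu hD)⟩
    exact le_antisymm (csSup_le_csSup hB2 hne1 hsub)
      (csSup_le (hne1.mono hsub) fun t ht => by
        obtain ⟨D, hD, htD⟩ := hdom t ht; exact htD.trans (le_csSup hB hD))
  · have hB2 : ¬ BddAbove S2 := fun h => hB (h.mono hsub)
    rw [Real.sSup_of_not_bddAbove hB, Real.sSup_of_not_bddAbove hB2]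
end

section
/- Weak duality certificate for multi-affine objectives: let p : ℝ^n → ℝ be multi-affine, and suppose t ∈ ℝ, λ ∈ ℝ^{m_I} with λ_i ≥ 0 for all i ∈ I, and μ ∈ ℝ^{m_J} satisfy t ≤ p(v) + Σ_{i∈I} λ_i(a_i·v − b_i) + Σ_{j∈J} μ_j(c_j·v − d_j) for all v ∈ V. Then for every x ∈ R with a_i·x ≤ b_i for all i ∈ I and c_j·x = d_j for all j ∈ J, one has t ≤ p(x); in particular t is a lower bound on the optimal value p* of (P). -/
open Function Set

def AffineInEachCoord {ι : Type*} [DecidableEq ι] (q : (ι → ℝ) → ℝ) : Prop :=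
  ∀ (x : ι → ℝ) (k : ι), ∃ α β : ℝ, ∀ s, q (update x k s) = α * s + β

namespace AffineInEachCoord

variable {ι : Type*} [DecidableEq ι] {q r : (ι → ℝ) → ℝ}

theorem add (hq : AffineInEachCoord q) (hr : AffineInEachCoord r) :
    AffineInEachCoord fun x => q x + r x := by
  intro x k
  obtain ⟨α, β, hqk⟩ := hq x k
  obtain ⟨α', β', hrk⟩ := hr x k
  exact ⟨α + α', β + β', fun s => by simp only [hqk, hrk]; ring⟩

theorem const_mul (hq : AffineInEachCoord q) (c : ℝ) :
    AffineInEachCoord fun x => c * q x := by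
  intro x k
  obtain ⟨α, β, hqk⟩ := hq x k
  exact ⟨c * α, c * β, fun s => by simp only [hqk]; ring⟩

theorem sub_const (hq : AffineInEachCoord q) (c : ℝ) :
    AffineInEachCoord fun x => q x - c := by
  intro x k
  obtain ⟨α, β, hqk⟩ := hq x k
  exact ⟨α, β - c, fun s => by simp only [hqk]; ring⟩

theorem sum {κ : Type*} [Fintype κ] {f : κ → (ι → ℝ) → ℝ}
    (hf : ∀ i, AffineInEachCoord (f i)) : AffineInEachCoord fun x => ∑ i, f i x := by
  intro x k
  choose α β hfk using fun i => hf i x k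
  refine ⟨∑ i, α i, ∑ i, β i, fun s => ?_⟩
  simp only [hfk, Finset.sum_add_distrib, Finset.sum_mul]

theorem concaveOn_update (hq : AffineInEachCoord q) (x : ι → ℝ) (k : ι) :
    ConcaveOn ℝ univ fun s => q (update x k s) := by
  obtain ⟨α, β, hqk⟩ := hq x k
  refine ⟨convex_univ, fun y _ z _ a b _ _ hab => ?_⟩
  simp only [hqk, smul_eq_mul]
  exact (by linear_combination β * hab : _ = _).le

end AffineInEachCoord

theorem affineInEachCoord_prod_ite {ι : Type*} [Fintype ι] [DecidableEq ι] (l : ι → Bool) :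
    AffineInEachCoord fun x : ι → ℝ => ∏ k, (if l k then x k else 1) := by
  intro x k
  set P := ∏ j ∈ Finset.univ \ {k}, (if l j then x j else 1)
  have hupd : ∀ s, ∏ j, (if l j then update x k s j else 1) = (if l k then s else 1) * P := by
    intro s
    simp only [apply_update (fun j y => if l j then y else (1 : ℝ))]
    exact Finset.prod_update_of_mem (Finset.mem_univ k) _ _
  by_cases hl : l k
  · exact ⟨P, 0, fun s => by simp [hupd, hl, mul_comm]⟩
  · exact ⟨0, P, fun s => by simp [hupd, hl]⟩

theorem MultiAffine.affineInEachCoord {n : ℕ} {p : (Fin n → ℝ) → ℝ} (hp : MultiAffine p) :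
    AffineInEachCoord p := by
  obtain ⟨c, hc⟩ := hp
  have hsum : AffineInEachCoord fun x : Fin n → ℝ =>
      ∑ l : Fin n → Bool, c l * ∏ k, (if l k then x k else 1) :=
    AffineInEachCoord.sum fun l => (affineInEachCoord_prod_ite l).const_mul (c l)
  simpa only [← hc] using hsum

theorem affineInEachCoord_dotp {n : ℕ} (w : Fin n → ℝ) : AffineInEachCoord (dotp w) := by
  intro x k
  refine ⟨w k, ∑ j ∈ Finset.univ \ {k}, w j * x j, fun s => ?_⟩
  simp only [dotp, apply_update (fun j y => w j * y)]
  exact Finset.sum_update_of_mem (Finset.mem_univ k) _ _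

theorem le_of_forall_vertex_le {ι : Type*} [Fintype ι] [DecidableEq ι]
    {q : (ι → ℝ) → ℝ} (hq : ∀ x k, ConcaveOn ℝ univ fun s => q (update x k s))
    {lo hi : ι → ℝ} {t : ℝ} (hv : ∀ v : ι → ℝ, (∀ k, v k = lo k ∨ v k = hi k) → t ≤ q v)
    {x : ι → ℝ} (hx : ∀ k, x k ∈ Icc (lo k) (hi k)) : t ≤ q x := by
  suffices h : ∀ S : Finset ι, ∀ x : ι → ℝ, (∀ k, x k ∈ Icc (lo k) (hi k)) →
      (∀ k ∉ S, x k = lo k ∨ x k = hi k) → t ≤ q x from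
    h Finset.univ x hx fun k hk => absurd (Finset.mem_univ k) hk
  intro S
  induction S using Finset.induction_on with
  | empty => exact fun x _ hvert => hv x fun k => hvert k (Finset.notMem_empty k)
  | insert k S _ ih =>
    intro x hx hvert
    have hend : ∀ y, (y = lo k ∨ y = hi k) → t ≤ q (update x k y) := by
      intro y hy
      refine ih _ (fun j => ?_) (fun j hj => ?_)
      · rcases eq_or_ne j k with rfl | hjk
        · have hlohi := (hx j).1.trans (hx j).2
          rcases hy with rfl | rfl <;> simp [hlohi]
        · simpa [hjk] using hx j
      · rcases eq_or_ne j k with rfl | hjk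
        · simpa using hy
        · simpa [hjk] using hvert j (by simp [hjk, hj])
    calc t ≤ min (q (update x k (lo k))) (q (update x k (hi k))) :=
          le_min (hend _ (Or.inl rfl)) (hend _ (Or.inr rfl))
      _ ≤ q (update x k (x k)) := (hq x k).min_le_of_mem_Icc trivial trivial (hx k)
      _ = q x := by rw [update_eq_self]

theorem stmt_7_general {n mI mJ : ℕ} (lo hi : Fin n → ℝ)
    (p : (Fin n → ℝ) → ℝ) (hp : MultiAffine p)
    (a : Fin mI → Fin n → ℝ) (b : Fin mI → ℝ)
    (c : Fin mJ → Fin n → ℝ) (d : Fin mJ → ℝ)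
    (t : ℝ) (lam : Fin mI → ℝ) (mu : Fin mJ → ℝ)
    (hlam : ∀ i, 0 ≤ lam i)
    (hcert : ∀ v : Fin n → ℝ, (∀ k, v k = lo k ∨ v k = hi k) →
      t ≤ p v + ∑ i, lam i * (dotp (a i) v - b i)
          + ∑ j, mu j * (dotp (c j) v - d j)) :
    ∀ x : Fin n → ℝ, (∀ k, x k ∈ Set.Icc (lo k) (hi k)) →
      (∀ i, dotp (a i) x ≤ b i) → (∀ j, dotp (c j) x = d j) →
      t ≤ p x := by
  intro x hx hineq heq
  have hL : AffineInEachCoord fun y => p y + ∑ i, lam i * (dotp (a i) y - b i)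
      + ∑ j, mu j * (dotp (c j) y - d j) :=
    (hp.affineInEachCoord.add <| .sum fun i =>
        ((affineInEachCoord_dotp (a i)).sub_const (b i)).const_mul (lam i)).add <|
      .sum fun j => ((affineInEachCoord_dotp (c j)).sub_const (d j)).const_mul (mu j)
  have hLx := le_of_forall_vertex_le hL.concaveOn_update hcert hx
  have hI : ∑ i, lam i * (dotp (a i) x - b i) ≤ 0 :=
    Finset.sum_nonpos fun i _ => mul_nonpos_of_nonneg_of_nonpos (hlam i) (by linarith [hineq i])
  have hJ : ∑ j, mu j * (dotp (c j) x - d j) = 0 :=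
    Finset.sum_eq_zero fun j _ => by rw [heq j, sub_self, mul_zero]
  linarith

/-- Weak duality certificate for multi-affine objectives: if `t`, `λ ≥ 0`, `μ` satisfy
`t ≤ p v + ∑ᵢ λᵢ(aᵢ·v − bᵢ) + ∑ⱼ μⱼ(cⱼ·v − dⱼ)` at every vertex `v` of the rectangle
`R`, then `t ≤ p x` for every feasible `x` (every `x ∈ R` with `aᵢ·x ≤ bᵢ` and
`cⱼ·x = dⱼ`); in particular `t` is a lower bound on the optimal value of (P). -/
theorem stmt_7 {n mI mJ : ℕ} (lo hi : Fin n → ℝ) (hlt : ∀ k, lo k < hi k)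
    (p : (Fin n → ℝ) → ℝ) (hp : MultiAffine p)
    (a : Fin mI → Fin n → ℝ) (b : Fin mI → ℝ)
    (c : Fin mJ → Fin n → ℝ) (d : Fin mJ → ℝ)
    (t : ℝ) (lam : Fin mI → ℝ) (mu : Fin mJ → ℝ)
    (hlam : ∀ i, 0 ≤ lam i)
    (hcert : ∀ v : Fin n → ℝ, (∀ k, v k = lo k ∨ v k = hi k) →
      t ≤ p v + ∑ i, lam i * (dotp (a i) v - b i)
          + ∑ j, mu j * (dotp (c j) v - d j)) :
    ∀ x : Fin n → ℝ, (∀ k, x k ∈ Set.Icc (lo k) (hi k)) →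
      (∀ i, dotp (a i) x ≤ b i) → (∀ j, dotp (c j) x = d j) →
      t ≤ p x :=
  stmt_7_general lo hi p hp a b c d t lam mu hlam hcert
end

section
/- Theorem (reduction by symmetry): the optimal value of the full dual LP — maximize t over t ∈ ℝ, λ ∈ ℝ^{m_I} with λ_i ≥ 0, μ ∈ ℝ^{m_J}, α ∈ ℝ^{(δ_1−1)+⋯+(δ_n−1)} subject to t ≤ q(v) + Σ_{i∈I} λ_i(a_i'·v − b_i) + Σ_{j∈J} μ_j(c_j'·v − d_j) + Σ_{k=1}^{n} Σ_{l=1}^{δ_k−1} α_{k,l}(e_{k,l}·v) for all v ∈ V' — equals the optimal value d* of the reduced dual LP (D̄). -/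
open Finset

/-- The lifted linear form: for `w ∈ ℝ^n`, `w' · z = ∑_k ∑_i (w k / δ k) * z k i`. -/
noncomputable def aLift {n : ℕ} (δ : Fin n → ℕ) (w : Fin n → ℝ)
    (z : ∀ k, Fin (δ k) → ℝ) : ℝ :=
  ∑ k, ∑ i : Fin (δ k), (w k / (δ k : ℝ)) * z k i

/-!
Block permutations leave the blossom `q` (by its symmetry) and every lifted form `w' · v`
unchanged, so the Lagrangian of a vertex depends only on its class, which `vrep` represents.
Hence a reduced dual solution is a full one with `α = 0`. Conversely, summing a full dual
constraint over all block permutations of a representative cancels the `α`-terms, because the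
permutations send positions `l` and `l + 1` to any given position equally often; so some
permutation makes the `α`-term nonpositive and the reduced constraint follows. The two sets of
feasible `t` therefore coincide.
-/

lemma sum_pi_perm_apply_eq {ι M : Type*} [Fintype ι] [DecidableEq ι] {β : ι → Type*}
    [∀ k, Fintype (β k)] [∀ k, DecidableEq (β k)] [AddCommMonoid M]
    (k : ι) (a b : β k) (F : β k → M) :
    ∑ g : ∀ k, Equiv.Perm (β k), F (g k a) = ∑ g : ∀ k, Equiv.Perm (β k), F (g k b) :=
  Fintype.sum_equiv (Equiv.mulRight (Pi.mulSingle k (Equiv.swap a b))) _ _ fun g => by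
    simp [Equiv.Perm.mul_apply]

section Symmetrization

variable {n : ℕ} {δ : Fin n → ℕ}

lemma blockRel_comp_perm (z : ∀ k, Fin (δ k) → ℝ) (g : ∀ k, Equiv.Perm (Fin (δ k))) :
    BlockRel δ (fun k i => z k (g k i)) z :=
  fun k => ⟨g k, fun _ => rfl⟩

lemma aLift_eq_of_blockRel (w : Fin n → ℝ) {z z' : ∀ k, Fin (δ k) → ℝ}
    (h : BlockRel δ z z') : aLift δ w z = aLift δ w z' := by
  refine sum_congr rfl fun k _ => ?_
  obtain ⟨π, hπ⟩ := h k
  simp_rw [hπ]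
  exact Equiv.sum_comp π (fun i => w k / δ k * z' k i)

lemma vrep_eq_lo_or_eq_hi (lo hi : Fin n → ℝ) (ℓ : ∀ k, Fin (δ k + 1)) (k : Fin n)
    (i : Fin (δ k)) : vrep δ lo hi ℓ k i = lo k ∨ vrep δ lo hi ℓ k i = hi k :=
  (ite_eq_or_eq _ _ _).symm

lemma exists_blockRel_vrep {lo hi : Fin n → ℝ} {v : ∀ k, Fin (δ k) → ℝ}
    (hv : ∀ k i, v k i = lo k ∨ v k i = hi k) :
    ∃ ℓ : ∀ k, Fin (δ k + 1), BlockRel δ v (vrep δ lo hi ℓ) := by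
  classical
  let ℓ : ∀ k, Fin (δ k + 1) := fun k =>
    ⟨#{i | v k i = hi k}, Nat.lt_succ_of_le ((card_filter_le _ _).trans_eq (card_fin _))⟩
  refine ⟨ℓ, fun k => ?_⟩
  obtain ⟨σ, hσ⟩ := Equiv.Perm.exists_map_finset_eq {i | v k i = hi k}
    {i : Fin (δ k) | (i : ℕ) < ℓ k} (by
      rw [Fin.card_filter_val_lt, min_eq_right (Nat.lt_succ_iff.mp (ℓ k).2)])
  have hσ_iff : ∀ i, v k i = hi k ↔ (σ i : ℕ) < ℓ k := fun i => by
    simpa using (congrArg (σ i ∈ ·) hσ).to_iff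
  refine ⟨σ, fun i => ?_⟩
  by_cases h : v k i = hi k
  · rw [vrep, if_pos ((hσ_iff i).1 h), h]
  · rw [vrep, if_neg (mt (hσ_iff i).2 h), (hv k i).resolve_right h]

end Symmetrization

section DualLP

variable {n mI mJ : ℕ} {δ : Fin n → ℕ}

noncomputable def diffPenalty (alpha : ∀ k : Fin n, Fin (δ k - 1) → ℝ)
    (v : ∀ k, Fin (δ k) → ℝ) : ℝ :=
  ∑ k, ∑ l : Fin (δ k - 1), alpha k l * (v k ⟨l, by omega⟩ - v k ⟨l + 1, by omega⟩)

lemma sum_diffPenalty_comp_perm (alpha : ∀ k : Fin n, Fin (δ k - 1) → ℝ)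
    (w : ∀ k, Fin (δ k) → ℝ) :
    ∑ g : ∀ k, Equiv.Perm (Fin (δ k)), diffPenalty alpha (fun k i => w k (g k i)) = 0 := by
  unfold diffPenalty
  rw [sum_comm]
  refine sum_eq_zero fun k _ => ?_
  rw [sum_comm]
  refine sum_eq_zero fun l _ => ?_
  rw [← mul_sum, sum_sub_distrib, sum_pi_perm_apply_eq, sub_self, mul_zero]

variable (q : (∀ k, Fin (δ k) → ℝ) → ℝ) (a : Fin mI → Fin n → ℝ) (b : Fin mI → ℝ)
  (c : Fin mJ → Fin n → ℝ) (d : Fin mJ → ℝ)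

noncomputable def lagrangian (lam : Fin mI → ℝ) (mu : Fin mJ → ℝ) (v : ∀ k, Fin (δ k) → ℝ) : ℝ :=
  q v + ∑ i, lam i * (aLift δ (a i) v - b i) + ∑ j, mu j * (aLift δ (c j) v - d j)

variable {q}

lemma lagrangian_eq_of_blockRel (hqsym : ∀ z z', BlockRel δ z z' → q z = q z')
    (lam : Fin mI → ℝ) (mu : Fin mJ → ℝ) {z z' : ∀ k, Fin (δ k) → ℝ} (h : BlockRel δ z z') :
    lagrangian q a b c d lam mu z = lagrangian q a b c d lam mu z' := by
  simp only [lagrangian, hqsym z z' h, aLift_eq_of_blockRel _ h]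

lemma le_lagrangian_vrep (hqsym : ∀ z z', BlockRel δ z z' → q z = q z')
    {lo hi : Fin n → ℝ} {t : ℝ} {lam : Fin mI → ℝ} {mu : Fin mJ → ℝ}
    {alpha : ∀ k : Fin n, Fin (δ k - 1) → ℝ}
    (hfull : ∀ v : ∀ k, Fin (δ k) → ℝ, (∀ k i, v k i = lo k ∨ v k i = hi k) →
      t ≤ lagrangian q a b c d lam mu v + diffPenalty alpha v)
    (ℓ : ∀ k, Fin (δ k + 1)) :
    t ≤ lagrangian q a b c d lam mu (vrep δ lo hi ℓ) := by
  set w := vrep δ lo hi ℓ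
  obtain ⟨g, -, hg⟩ := exists_le_of_sum_le univ_nonempty
    (f := fun g : ∀ k, Equiv.Perm (Fin (δ k)) => diffPenalty alpha (fun k i => w k (g k i)))
    (g := fun _ => 0) (by rw [sum_diffPenalty_comp_perm, sum_const_zero])
  calc t ≤ lagrangian q a b c d lam mu (fun k i => w k (g k i))
        + diffPenalty alpha (fun k i => w k (g k i)) :=
        hfull _ fun k i => vrep_eq_lo_or_eq_hi lo hi ℓ k (g k i)
    _ ≤ lagrangian q a b c d lam mu w + 0 :=
        add_le_add (lagrangian_eq_of_blockRel a b c d hqsym lam mu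
          (blockRel_comp_perm w g)).le hg
    _ = lagrangian q a b c d lam mu w := add_zero _

end DualLP

/-- Reduction by symmetry: the optimal value of the full dual LP (with multipliers
`α_{k,l}` for the difference forms `e_{k,l}` and constraints indexed by all vertices
`v ∈ V'` of `R'`) equals the optimal value `d*` of the reduced dual LP (D̄), whose
constraints are indexed by the equivalence classes `v̄ ∈ V̄'` of vertices. -/
theorem stmt_9 {n mI mJ : ℕ} (δ : Fin n → ℕ)
    (lo hi : Fin n → ℝ)
    (q : (∀ k, Fin (δ k) → ℝ) → ℝ)
    (hqsym : ∀ z z' : ∀ k, Fin (δ k) → ℝ, BlockRel δ z z' → q z = q z')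
    (a : Fin mI → Fin n → ℝ) (b : Fin mI → ℝ)
    (c : Fin mJ → Fin n → ℝ) (d : Fin mJ → ℝ) :
    sSup {t : ℝ | ∃ (lam : Fin mI → ℝ) (mu : Fin mJ → ℝ)
        (alpha : ∀ k : Fin n, Fin (δ k - 1) → ℝ), (∀ i, 0 ≤ lam i) ∧
        ∀ v : ∀ k, Fin (δ k) → ℝ, (∀ k i, v k i = lo k ∨ v k i = hi k) →
          t ≤ q v + ∑ i, lam i * (aLift δ (a i) v - b i)
              + ∑ j, mu j * (aLift δ (c j) v - d j)
              + ∑ k, ∑ l : Fin (δ k - 1),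
                  alpha k l * (v k ⟨l.1, by have := l.2; omega⟩
                               - v k ⟨l.1 + 1, by have := l.2; omega⟩)}
    = sSup {t : ℝ | ∃ (lam : Fin mI → ℝ) (mu : Fin mJ → ℝ), (∀ i, 0 ≤ lam i) ∧
        ∀ ℓ : ∀ k, Fin (δ k + 1),
          t ≤ q (vrep δ lo hi ℓ) + ∑ i, lam i * (aLift δ (a i) (vrep δ lo hi ℓ) - b i)
              + ∑ j, mu j * (aLift δ (c j) (vrep δ lo hi ℓ) - d j)} := by
  congr 1
  ext t
  constructor
  · rintro ⟨lam, mu, alpha, hlam, hfull⟩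
    exact ⟨lam, mu, hlam, le_lagrangian_vrep a b c d hqsym hfull⟩
  · rintro ⟨lam, mu, hlam, hred⟩
    refine ⟨lam, mu, 0, hlam, fun v hv => ?_⟩
    obtain ⟨ℓ, hℓ⟩ := exists_blockRel_vrep hv
    have hpen : diffPenalty (0 : ∀ k : Fin n, Fin (δ k - 1) → ℝ) v = 0 := by
      simp [diffPenalty]
    change t ≤ lagrangian q a b c d lam mu v + diffPenalty 0 v
    rw [hpen, add_zero, lagrangian_eq_of_blockRel a b c d hqsym lam mu hℓ]
    exact hred ℓ
end

section
/- Sensitivity: let (t*, λ*, μ*) be a feasible point of the reduced dual LP (D̄) for the unperturbed problem. For α ∈ ℝ^{m_I} and β ∈ ℝ^{m_J} such that the perturbed problem (P_{α,β}) (same as (P) but with right-hand sides b_i + α_i and d_j + β_j) is feasible, the point (t* − λ*·α − μ*·β, λ*, μ*) is feasible for the perturbed reduced dual LP, and consequently the optimal value p*(α,β) of (P_{α,β}) satisfies p*(α,β) ≥ d*(α,β) ≥ t* − λ*·α − μ*·β, where d*(α,β) is the optimal value of the perturbed reduced dual LP. -/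
open Finset

lemma aLift_update {n : ℕ} (δ : Fin n → ℕ) (w : Fin n → ℝ)
    (z : ∀ k, Fin (δ k) → ℝ) (k : Fin n) (i : Fin (δ k)) (v : ℝ) :
    aLift δ w (Function.update z k (Function.update (z k) i v))
      = aLift δ w z + (w k / (δ k : ℝ)) * (v - z k i) := by
  classical
  unfold aLift
  have hsplit : ∀ g : ∀ k, Fin (δ k) → ℝ,
      (∑ k', ∑ i' : Fin (δ k'), w k' / (δ k' : ℝ) * g k' i')
      = (∑ i' : Fin (δ k), w k / (δ k : ℝ) * g k i')
        + ∑ k' ∈ Finset.univ.erase k, ∑ i' : Fin (δ k'), w k' / (δ k' : ℝ) * g k' i' :=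
    fun g => (Finset.add_sum_erase _ _ (Finset.mem_univ k)).symm
  rw [hsplit, hsplit]
  have houter : ∑ k' ∈ Finset.univ.erase k, ∑ i' : Fin (δ k'),
        w k' / (δ k' : ℝ) * (Function.update z k (Function.update (z k) i v)) k' i'
      = ∑ k' ∈ Finset.univ.erase k, ∑ i' : Fin (δ k'), w k' / (δ k' : ℝ) * z k' i' := by
    refine Finset.sum_congr rfl fun k' hk' => ?_
    rw [Function.update_of_ne (Finset.ne_of_mem_erase hk')]
  rw [houter]
  have hsplit2 : ∀ g : Fin (δ k) → ℝ,
      (∑ i' : Fin (δ k), w k / (δ k : ℝ) * g i')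
      = w k / (δ k : ℝ) * g i + ∑ i' ∈ Finset.univ.erase i, w k / (δ k : ℝ) * g i' :=
    fun g => (Finset.add_sum_erase _ _ (Finset.mem_univ i)).symm
  have hinner : ∑ i' : Fin (δ k),
        w k / (δ k : ℝ) * (Function.update z k (Function.update (z k) i v)) k i'
      = w k / (δ k : ℝ) * v + ∑ i' ∈ Finset.univ.erase i, w k / (δ k : ℝ) * z k i' := by
    simp only [Function.update_self]
    rw [hsplit2, Function.update_self]
    congr 1
    refine Finset.sum_congr rfl fun i' hi' => ?_
    rw [Function.update_of_ne (Finset.ne_of_mem_erase hi')]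
  rw [hinner, hsplit2]
  ring

lemma aLift_perm {n : ℕ} (δ : Fin n → ℕ) (w : Fin n → ℝ)
    (z z' : ∀ k, Fin (δ k) → ℝ) (h : BlockRel δ z z') :
    aLift δ w z = aLift δ w z' := by
  unfold aLift
  refine Finset.sum_congr rfl fun k _ => ?_
  obtain ⟨π, hπ⟩ := h k
  calc ∑ i, w k / (δ k : ℝ) * z k i = ∑ i, w k / (δ k : ℝ) * z' k (π i) := by
        simp_rw [hπ]
    _ = ∑ i, w k / (δ k : ℝ) * z' k i := Equiv.sum_comp π (fun i => w k / (δ k : ℝ) * z' k i)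

lemma aLift_diag {n : ℕ} (δ : Fin n → ℕ) (hδ : ∀ k, 1 ≤ δ k) (w : Fin n → ℝ)
    (x : Fin n → ℝ) : aLift δ w (fun k _ => x k) = dotp w x := by
  unfold aLift dotp
  refine Finset.sum_congr rfl fun k _ => ?_
  rw [Finset.sum_const, Finset.card_univ, Fintype.card_fin, nsmul_eq_mul]
  have h : (δ k : ℝ) ≠ 0 := Nat.cast_ne_zero.mpr (Nat.one_le_iff_ne_zero.mp (hδ k))
  field_simp

lemma expansion {n : ℕ} (δ : Fin n → ℕ) (lo hi : Fin n → ℝ) (hlt : ∀ k, lo k < hi k)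
    (F : (∀ k, Fin (δ k) → ℝ) → ℝ) (hma : MultiAffineB δ F)
    (hsym : ∀ z z', BlockRel δ z z' → F z = F z')
    (x : Fin n → ℝ) (hx : ∀ k, x k ∈ Set.Icc (lo k) (hi k)) :
    ∃ w : (∀ k, Fin (δ k + 1)) → ℝ, (∀ ℓ, 0 ≤ w ℓ) ∧ (∑ ℓ, w ℓ) = 1 ∧
      F (fun k _ => x k) = ∑ ℓ, w ℓ * F (vrep δ lo hi ℓ) := by
  classical
  obtain ⟨θ, hθ0, hθ1, hmix⟩ : ∃ θ : Fin n → ℝ, (∀ k, 0 ≤ θ k) ∧ (∀ k, θ k ≤ 1) ∧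
      ∀ k, θ k * hi k + (1 - θ k) * lo k = x k := by
    refine ⟨fun k => (x k - lo k) / (hi k - lo k), fun k => ?_, fun k => ?_, fun k => ?_⟩
    · exact div_nonneg (sub_nonneg.mpr (hx k).1) (sub_pos.mpr (hlt k)).le
    · rw [div_le_one (sub_pos.mpr (hlt k))]; linarith [(hx k).2]
    · have h : hi k - lo k ≠ 0 := (sub_pos.mpr (hlt k)).ne'
      field_simp
      ring
  set wt : ∀ _ : Fin n, Bool → ℝ := fun k b => if b then θ k else 1 - θ k with hwtdef
  have hwt0 : ∀ k b, 0 ≤ wt k b := by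
    intro k b
    cases b
    · show (0:ℝ) ≤ if false then θ k else 1 - θ k
      rw [if_neg (by simp)]
      linarith [hθ1 k]
    · show (0:ℝ) ≤ if true then θ k else 1 - θ k
      rw [if_pos rfl]
      exact hθ0 k
  have hwtt : ∀ k, wt k true = θ k := fun k => if_pos rfl
  have hwtf : ∀ k, wt k false = 1 - θ k := fun k => if_neg (by simp)
  set W : (∀ k, Fin (δ k) → Bool) → ℝ := fun ε => ∏ k, ∏ i, wt k (ε k i) with hWdef
  have hW0 : ∀ ε, 0 ≤ W ε := fun ε =>
    Finset.prod_nonneg fun k _ => Finset.prod_nonneg fun i _ => hwt0 k _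
  have hblock : ∀ k : Fin n, ∑ b : Fin (δ k) → Bool, ∏ i, wt k (b i) = 1 := by
    intro k
    rw [← Fintype.piFinset_univ, Finset.sum_prod_piFinset]
    have h1 : (∑ b : Bool, wt k b) = 1 := by
      rw [Fintype.sum_bool, hwtt, hwtf]; ring
    simp only [h1]
    exact Finset.prod_const_one
  have hWsum : ∑ ε : ∀ k, Fin (δ k) → Bool, W ε = 1 := by
    have h1 : ∑ ε ∈ Fintype.piFinset (fun k : Fin n => (Finset.univ : Finset (Fin (δ k) → Bool))),
        ∏ k, ∏ i, wt k (ε k i)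
        = ∏ k, ∑ b ∈ (Finset.univ : Finset (Fin (δ k) → Bool)), ∏ i, wt k (b i) :=
      (Finset.prod_univ_sum (fun k : Fin n => (Finset.univ : Finset (Fin (δ k) → Bool)))
        (fun k b => ∏ i, wt k (b i))).symm
    rw [hWdef]
    simp only
    rw [← Fintype.piFinset_univ, h1]
    have h2 : ∀ k : Fin n, (∑ b ∈ (Finset.univ : Finset (Fin (δ k) → Bool)), ∏ i, wt k (b i)) = 1 :=
      hblock
    simp only [h2]
    exact Finset.prod_const_one
  -- the hybrid point
  set P : Finset ((k : Fin n) × Fin (δ k)) → (∀ k, Fin (δ k) → Bool) → ∀ k, Fin (δ k) → ℝ :=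
    fun S ε k i => if (⟨k, i⟩ : (k : Fin n) × Fin (δ k)) ∈ S
      then (if ε k i then hi k else lo k) else x k with hPdef
  have key : ∀ S : Finset ((k : Fin n) × Fin (δ k)),
      F (fun k _ => x k) = ∑ ε : ∀ k, Fin (δ k) → Bool, W ε * F (P S ε) := by
    intro S
    induction S using Finset.induction_on with
    | empty =>
      have h : ∀ ε, P ∅ ε = fun k _ => x k := by
        intro ε; funext k i; simp [hPdef]
      simp_rw [h, ← Finset.sum_mul, hWsum, one_mul]
    | @insert c S hc ih =>
      obtain ⟨k₀, i₀⟩ := c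
      rw [ih]
      have hPc : ∀ ε, P S ε k₀ i₀ = x k₀ := by
        intro ε; simp [hPdef, hc]
      set Ahi : (∀ k, Fin (δ k) → Bool) → ∀ k, Fin (δ k) → ℝ := fun ε =>
        Function.update (P S ε) k₀ (Function.update (P S ε k₀) i₀ (hi k₀)) with hAhidef
      set Alo : (∀ k, Fin (δ k) → Bool) → ∀ k, Fin (δ k) → ℝ := fun ε =>
        Function.update (P S ε) k₀ (Function.update (P S ε k₀) i₀ (lo k₀)) with hAlodef
      have hPhi : ∀ ε, ε k₀ i₀ = true → P (insert ⟨k₀, i₀⟩ S) ε = Ahi ε := by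
        intro ε hb
        funext k i
        by_cases hk : k = k₀
        · subst hk
          by_cases hi' : i = i₀
          · subst hi'
            simp [hPdef, hAhidef, hb]
          · have hne : (⟨k, i⟩ : (k : Fin n) × Fin (δ k)) ≠ ⟨k, i₀⟩ := by
              simp [Sigma.mk.inj_iff, hi']
            simp [hPdef, hAhidef, Finset.mem_insert, hne,
              Function.update_of_ne hi']
        · have hne : (⟨k, i⟩ : (k : Fin n) × Fin (δ k)) ≠ ⟨k₀, i₀⟩ := by
            simp [Sigma.mk.inj_iff, hk]
          simp [hPdef, hAhidef, Finset.mem_insert, hne, Function.update_of_ne hk]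
      have hPlo : ∀ ε, ε k₀ i₀ = false → P (insert ⟨k₀, i₀⟩ S) ε = Alo ε := by
        intro ε hb
        funext k i
        by_cases hk : k = k₀
        · subst hk
          by_cases hi' : i = i₀
          · subst hi'
            simp [hPdef, hAlodef, hb]
          · have hne : (⟨k, i⟩ : (k : Fin n) × Fin (δ k)) ≠ ⟨k, i₀⟩ := by
              simp [Sigma.mk.inj_iff, hi']
            simp [hPdef, hAlodef, Finset.mem_insert, hne,
              Function.update_of_ne hi']
        · have hne : (⟨k, i⟩ : (k : Fin n) × Fin (δ k)) ≠ ⟨k₀, i₀⟩ := by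
            simp [Sigma.mk.inj_iff, hk]
          simp [hPdef, hAlodef, Finset.mem_insert, hne, Function.update_of_ne hk]
      have haff : ∀ ε, F (P S ε) = θ k₀ * F (Ahi ε) + (1 - θ k₀) * F (Alo ε) := by
        intro ε
        have h := hma k₀ i₀ (P S ε) (hi k₀) (lo k₀) (θ k₀)
        rw [hmix k₀] at h
        have hself : Function.update (P S ε) k₀ (Function.update (P S ε k₀) i₀ (x k₀))
            = P S ε := by
          rw [← hPc ε, Function.update_eq_self, Function.update_eq_self]
        rw [hself] at h
        exact h
      set flip : (∀ k, Fin (δ k) → Bool) → ∀ k, Fin (δ k) → Bool := fun ε =>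
        Function.update ε k₀ (Function.update (ε k₀) i₀ (!ε k₀ i₀)) with hflipdef
      have hflip_c : ∀ ε, flip ε k₀ i₀ = !ε k₀ i₀ := by
        intro ε; simp [hflipdef]
      have hflip_off : ∀ (ε) (k) (i : Fin (δ k)), ¬(k = k₀ ∧ HEq i i₀) → flip ε k i = ε k i := by
        intro ε k i h
        by_cases hk : k = k₀
        · subst hk
          have hi' : i ≠ i₀ := fun h' => h ⟨rfl, h' ▸ HEq.rfl⟩
          simp [hflipdef, Function.update_of_ne hi']
        · simp [hflipdef, Function.update_of_ne hk]
      have hflipflip : ∀ ε, flip (flip ε) = ε := by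
        intro ε; funext k i
        by_cases hk : k = k₀
        · subst hk
          by_cases hi' : i = i₀
          · subst hi'; simp [hflipdef]
          · simp [hflipdef, Function.update_of_ne hi']
        · simp [hflipdef, Function.update_of_ne hk]
      have hPflip : ∀ ε, P S (flip ε) = P S ε := by
        intro ε; funext k i
        by_cases hmem : (⟨k, i⟩ : (k : Fin n) × Fin (δ k)) ∈ S
        · have hne : ¬(k = k₀ ∧ HEq i i₀) := by
            rintro ⟨rfl, h2⟩
            exact hc (by rwa [eq_of_heq h2] at hmem)
          simp [hPdef, hmem, hflip_off ε k i hne]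
        · simp [hPdef, hmem]
      set W0 : (∀ k, Fin (δ k) → Bool) → ℝ := fun ε =>
        (∏ i ∈ Finset.univ.erase i₀, wt k₀ (ε k₀ i)) *
          ∏ k ∈ Finset.univ.erase k₀, ∏ i, wt k (ε k i) with hW0def
      have hWfac : ∀ ε, W ε = wt k₀ (ε k₀ i₀) * W0 ε := by
        intro ε
        rw [hWdef, hW0def]
        simp only
        rw [← Finset.mul_prod_erase Finset.univ _ (Finset.mem_univ k₀),
          ← Finset.mul_prod_erase Finset.univ _ (Finset.mem_univ i₀)]
        ring
      have hW0flip : ∀ ε, W0 (flip ε) = W0 ε := by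
        intro ε
        rw [hW0def]
        simp only
        congr 1
        · refine Finset.prod_congr rfl fun i hi' => ?_
          have h' : i ≠ i₀ := Finset.ne_of_mem_erase hi'
          rw [hflip_off ε k₀ i (fun h => h' (eq_of_heq h.2))]
        · refine Finset.prod_congr rfl fun k hk => ?_
          refine Finset.prod_congr rfl fun i _ => ?_
          have h' : k ≠ k₀ := Finset.ne_of_mem_erase hk
          rw [hflip_off ε k i (fun h => h' h.1)]
      have hAhiflip : ∀ ε, Ahi (flip ε) = Ahi ε := by
        intro ε; rw [hAhidef]; simp only; rw [hPflip]
      have hAloflip : ∀ ε, Alo (flip ε) = Alo ε := by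
        intro ε; rw [hAlodef]; simp only; rw [hPflip]
      have hpair : ∀ ε : ∀ k, Fin (δ k) → Bool,
          (W ε * F (P (insert ⟨k₀, i₀⟩ S) ε)
            - W ε * (θ k₀ * F (Ahi ε) + (1 - θ k₀) * F (Alo ε)))
          + (W (flip ε) * F (P (insert ⟨k₀, i₀⟩ S) (flip ε))
            - W (flip ε) * (θ k₀ * F (Ahi (flip ε)) + (1 - θ k₀) * F (Alo (flip ε)))) = 0 := by
        intro ε
        rw [hWfac ε, hWfac (flip ε), hflip_c, hW0flip, hAhiflip, hAloflip]
        cases hb : ε k₀ i₀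
        · rw [hPlo ε hb, hPhi (flip ε) (by rw [hflip_c, hb]; rfl), hAhiflip ε]
          simp only [Bool.not_false, hwtt, hwtf]
          ring
        · rw [hPhi ε hb, hPlo (flip ε) (by rw [hflip_c, hb]; rfl), hAloflip ε]
          simp only [Bool.not_true, hwtt, hwtf]
          ring
      have hzero : ∑ ε : ∀ k, Fin (δ k) → Bool,
          (W ε * F (P (insert ⟨k₀, i₀⟩ S) ε)
            - W ε * (θ k₀ * F (Ahi ε) + (1 - θ k₀) * F (Alo ε))) = 0 := by
        refine Finset.sum_ninvolution flip hpair ?_ (fun ε => Finset.mem_univ _) hflipflip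
        intro ε _ h
        have h2 := congrFun (congrFun h k₀) i₀
        rw [hflip_c] at h2
        exact Bool.not_ne_self _ h2
      rw [Finset.sum_sub_distrib, sub_eq_zero] at hzero
      calc ∑ ε : ∀ k, Fin (δ k) → Bool, W ε * F (P S ε)
          = ∑ ε : ∀ k, Fin (δ k) → Bool,
              W ε * (θ k₀ * F (Ahi ε) + (1 - θ k₀) * F (Alo ε)) := by
            refine Finset.sum_congr rfl fun ε _ => ?_
            rw [haff ε]
        _ = ∑ ε : ∀ k, Fin (δ k) → Bool, W ε * F (P (insert ⟨k₀, i₀⟩ S) ε) := hzero.symm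
  -- apply at univ
  have hvertkey := key Finset.univ
  have hPuniv : ∀ ε, P Finset.univ ε = fun k i => if ε k i then hi k else lo k := by
    intro ε; funext k i; simp [hPdef]
  simp_rw [hPuniv] at hvertkey
  -- count
  set count : (∀ k, Fin (δ k) → Bool) → ∀ k, Fin (δ k + 1) := fun ε k =>
    ⟨(Finset.univ.filter fun i => ε k i = true).card,
      Nat.lt_succ_of_le ((Finset.card_filter_le _ _).trans (by simp))⟩ with hcountdef
  have hvert : ∀ ε, F (fun k i => if ε k i then hi k else lo k)
      = F (vrep δ lo hi (count ε)) := by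
    intro ε
    apply hsym
    intro k
    set l := (Finset.univ.filter fun i => ε k i = true).card with hldef
    have hl : l ≤ δ k := (Finset.card_filter_le _ _).trans (by simp)
    have hcard1 : Fintype.card {i : Fin (δ k) // ε k i = true} = l := by
      rw [Fintype.card_subtype]
    have e2 : {j : Fin (δ k) // (j : ℕ) < l} ≃ Fin l :=
      { toFun := fun j => ⟨j.1, j.2⟩
        invFun := fun i => ⟨⟨i.1, lt_of_lt_of_le i.2 hl⟩, i.2⟩
        left_inv := fun j => rfl
        right_inv := fun i => rfl }
    have hcard2 : Fintype.card {j : Fin (δ k) // (j : ℕ) < l} = l := by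
      rw [Fintype.card_congr e2, Fintype.card_fin]
    have hceq : Fintype.card {i : Fin (δ k) // ε k i = true}
        = Fintype.card {j : Fin (δ k) // (j : ℕ) < l} := by rw [hcard1, hcard2]
    have hceqc : Fintype.card {i : Fin (δ k) // ¬(ε k i = true)}
        = Fintype.card {j : Fin (δ k) // ¬((j : ℕ) < l)} := by
      rw [Fintype.card_subtype_compl, Fintype.card_subtype_compl, hcard1, hcard2]
    set e := Fintype.equivOfCardEq hceq with hedef
    set e' := Fintype.equivOfCardEq hceqc with he'def
    have happ : ∀ i, (((Equiv.subtypeCongr e e' : Equiv.Perm (Fin (δ k))) i : Fin (δ k)) : ℕ) < l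
        ↔ ε k i = true := by
      intro i
      by_cases hp : ε k i = true
      · have h : (Equiv.subtypeCongr e e' : Equiv.Perm (Fin (δ k))) i = ↑(e ⟨i, hp⟩) := by
          simp [Equiv.subtypeCongr, hp]
        rw [h]
        exact ⟨fun _ => hp, fun _ => (e ⟨i, hp⟩).2⟩
      · have h : (Equiv.subtypeCongr e e' : Equiv.Perm (Fin (δ k))) i = ↑(e' ⟨i, hp⟩) := by
          simp [Equiv.subtypeCongr, hp]
        rw [h]
        exact ⟨fun hlt' => absurd hlt' (e' ⟨i, hp⟩).2, fun h' => absurd h' hp⟩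
    refine ⟨Equiv.subtypeCongr e e', fun i => ?_⟩
    show (if ε k i then hi k else lo k) = vrep δ lo hi (count ε) k (Equiv.subtypeCongr e e' i)
    unfold vrep
    by_cases hp : ε k i = true
    · rw [if_pos hp, if_pos ((happ i).mpr hp)]
    · rw [if_neg hp, if_neg (fun h => hp ((happ i).mp h))]
  simp_rw [hvert] at hvertkey
  -- group by fibers
  refine ⟨fun ℓ => ∑ ε ∈ Finset.univ.filter fun ε => count ε = ℓ, W ε, ?_, ?_, ?_⟩
  · intro ℓ; exact Finset.sum_nonneg fun ε _ => hW0 ε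
  · rw [Finset.sum_fiberwise Finset.univ count W]
    exact hWsum
  · rw [hvertkey]
    rw [← Finset.sum_fiberwise Finset.univ count (fun ε => W ε * F (vrep δ lo hi (count ε)))]
    refine Finset.sum_congr rfl fun ℓ _ => ?_
    rw [Finset.sum_mul]
    refine Finset.sum_congr rfl fun ε hε => ?_
    rw [Finset.mem_filter] at hε
    rw [hε.2]


lemma weak_duality {n mI mJ : ℕ} (δ : Fin n → ℕ) (hδ : ∀ k, 1 ≤ δ k)
    (lo hi : Fin n → ℝ) (hlt : ∀ k, lo k < hi k)
    (p : (Fin n → ℝ) → ℝ) (q : (∀ k, Fin (δ k) → ℝ) → ℝ)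
    (hqma : MultiAffineB δ q)
    (hqsym : ∀ z z', BlockRel δ z z' → q z = q z')
    (hqdiag : ∀ x : Fin n → ℝ, q (fun k _ => x k) = p x)
    (a : Fin mI → Fin n → ℝ) (b : Fin mI → ℝ)
    (c : Fin mJ → Fin n → ℝ) (d : Fin mJ → ℝ)
    (α : Fin mI → ℝ) (β : Fin mJ → ℝ)
    (t : ℝ) (lam : Fin mI → ℝ) (mu : Fin mJ → ℝ)
    (hlam : ∀ i, 0 ≤ lam i)
    (hfd : ∀ ℓ : ∀ k, Fin (δ k + 1),
      t ≤ q (vrep δ lo hi ℓ)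
        + ∑ i, lam i * (aLift δ (a i) (vrep δ lo hi ℓ) - b i - α i)
        + ∑ j, mu j * (aLift δ (c j) (vrep δ lo hi ℓ) - d j - β j))
    (x : Fin n → ℝ) (hx : ∀ k, x k ∈ Set.Icc (lo k) (hi k))
    (hxa : ∀ i, dotp (a i) x ≤ b i + α i) (hxc : ∀ j, dotp (c j) x = d j + β j) :
    t ≤ p x := by
  classical
  set G : (∀ k, Fin (δ k) → ℝ) → ℝ := fun z =>
    q z + ∑ i, lam i * (aLift δ (a i) z - b i - α i)
        + ∑ j, mu j * (aLift δ (c j) z - d j - β j) with hGdef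
  have hsum : ∀ (m : ℕ) (lam' : Fin m → ℝ) (w : Fin m → Fin n → ℝ) (b1 b2 : Fin m → ℝ)
      (k : Fin n) (i : Fin (δ k)) (z : ∀ k, Fin (δ k) → ℝ) (s t' θ' : ℝ),
      (∑ i', lam' i' * (aLift δ (w i')
          (Function.update z k (Function.update (z k) i (θ' * s + (1 - θ') * t')))
        - b1 i' - b2 i'))
      = θ' * ∑ i', lam' i' * (aLift δ (w i')
            (Function.update z k (Function.update (z k) i s)) - b1 i' - b2 i')
        + (1 - θ') * ∑ i', lam' i' * (aLift δ (w i')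
            (Function.update z k (Function.update (z k) i t')) - b1 i' - b2 i') := by
    intro m lam' w b1 b2 k i z s t' θ'
    simp only [aLift_update]
    rw [Finset.mul_sum, Finset.mul_sum, ← Finset.sum_add_distrib]
    refine Finset.sum_congr rfl fun i' _ => ?_
    ring
  have hGma : MultiAffineB δ G := by
    intro k i z s t' θ'
    rw [hGdef]
    simp only
    rw [hqma k i z s t' θ', hsum mI lam a b α k i z s t' θ', hsum mJ mu c d β k i z s t' θ']
    ring
  have hGsym : ∀ z z', BlockRel δ z z' → G z = G z' := by
    intro z z' h
    rw [hGdef]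
    simp only
    rw [hqsym z z' h]
    congr 1
    · congr 1
      refine Finset.sum_congr rfl fun i _ => ?_
      rw [aLift_perm δ (a i) z z' h]
    · refine Finset.sum_congr rfl fun j _ => ?_
      rw [aLift_perm δ (c j) z z' h]
  obtain ⟨w, hw0, hw1, hexp⟩ := expansion δ lo hi hlt G hGma hGsym x hx
  have h1 : t ≤ G (fun k _ => x k) := by
    rw [hexp]
    calc t = ∑ ℓ : ∀ k, Fin (δ k + 1), w ℓ * t := by
          rw [← Finset.sum_mul, hw1, one_mul]
      _ ≤ ∑ ℓ : ∀ k, Fin (δ k + 1), w ℓ * G (vrep δ lo hi ℓ) :=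
          Finset.sum_le_sum fun ℓ _ => mul_le_mul_of_nonneg_left (hfd ℓ) (hw0 ℓ)
  have h2 : G (fun k _ => x k) ≤ p x := by
    rw [hGdef]
    simp only
    rw [hqdiag x]
    have hA : ∀ i, aLift δ (a i) (fun k _ => x k) = dotp (a i) x :=
      fun i => aLift_diag δ hδ (a i) x
    have hC : ∀ j, aLift δ (c j) (fun k _ => x k) = dotp (c j) x :=
      fun j => aLift_diag δ hδ (c j) x
    simp_rw [hA, hC]
    have hs1 : ∑ i, lam i * (dotp (a i) x - b i - α i) ≤ 0 :=
      Finset.sum_nonpos fun i _ => by nlinarith [hlam i, hxa i]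
    have hs2 : ∑ j, mu j * (dotp (c j) x - d j - β j) = 0 :=
      Finset.sum_eq_zero fun j _ => by rw [hxc j]; ring
    linarith
  linarith

/-- Sensitivity: if `(t*, λ*, μ*)` is feasible for the reduced dual LP (D̄) of the
unperturbed problem, and the perturbed problem (P_{α,β}) (right-hand sides `bᵢ + αᵢ`,
`dⱼ + βⱼ`) is feasible, then `(t* − λ*·α − μ*·β, λ*, μ*)` is feasible for the
perturbed reduced dual LP, and consequently
`p*(α,β) ≥ d*(α,β) ≥ t* − λ*·α − μ*·β`. -/
theorem stmt_11 {n mI mJ : ℕ} (δ : Fin n → ℕ) (hδ : ∀ k, 1 ≤ δ k)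
    (lo hi : Fin n → ℝ) (hlt : ∀ k, lo k < hi k)
    (p : (Fin n → ℝ) → ℝ) (q : (∀ k, Fin (δ k) → ℝ) → ℝ)
    (hqma : MultiAffineB δ q)
    (hqsym : ∀ z z' : ∀ k, Fin (δ k) → ℝ, BlockRel δ z z' → q z = q z')
    (hqdiag : ∀ x : Fin n → ℝ, q (fun k _ => x k) = p x)
    (a : Fin mI → Fin n → ℝ) (b : Fin mI → ℝ)
    (c : Fin mJ → Fin n → ℝ) (d : Fin mJ → ℝ)
    (α : Fin mI → ℝ) (β : Fin mJ → ℝ)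
    (tstar : ℝ) (lamstar : Fin mI → ℝ) (mustar : Fin mJ → ℝ)
    (hlam : ∀ i, 0 ≤ lamstar i)
    (hfeasdual : ∀ ℓ : ∀ k, Fin (δ k + 1),
      tstar ≤ q (vrep δ lo hi ℓ)
          + ∑ i, lamstar i * (aLift δ (a i) (vrep δ lo hi ℓ) - b i)
          + ∑ j, mustar j * (aLift δ (c j) (vrep δ lo hi ℓ) - d j))
    (hfeaspert : ∃ x : Fin n → ℝ, (∀ k, x k ∈ Set.Icc (lo k) (hi k)) ∧
      (∀ i, dotp (a i) x ≤ b i + α i) ∧ (∀ j, dotp (c j) x = d j + β j)) :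
    (∀ ℓ : ∀ k, Fin (δ k + 1),
      tstar - (∑ i, lamstar i * α i) - (∑ j, mustar j * β j)
        ≤ q (vrep δ lo hi ℓ)
          + ∑ i, lamstar i * (aLift δ (a i) (vrep δ lo hi ℓ) - b i - α i)
          + ∑ j, mustar j * (aLift δ (c j) (vrep δ lo hi ℓ) - d j - β j))
    ∧
    (tstar - (∑ i, lamstar i * α i) - (∑ j, mustar j * β j)
      ≤ sSup {t : ℝ | ∃ (lam : Fin mI → ℝ) (mu : Fin mJ → ℝ), (∀ i, 0 ≤ lam i) ∧
          ∀ ℓ : ∀ k, Fin (δ k + 1),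
            t ≤ q (vrep δ lo hi ℓ)
                + ∑ i, lam i * (aLift δ (a i) (vrep δ lo hi ℓ) - b i - α i)
                + ∑ j, mu j * (aLift δ (c j) (vrep δ lo hi ℓ) - d j - β j)})
    ∧
    (sSup {t : ℝ | ∃ (lam : Fin mI → ℝ) (mu : Fin mJ → ℝ), (∀ i, 0 ≤ lam i) ∧
          ∀ ℓ : ∀ k, Fin (δ k + 1),
            t ≤ q (vrep δ lo hi ℓ)
                + ∑ i, lam i * (aLift δ (a i) (vrep δ lo hi ℓ) - b i - α i)
                + ∑ j, mu j * (aLift δ (c j) (vrep δ lo hi ℓ) - d j - β j)}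
      ≤ sInf {y : ℝ | ∃ x : Fin n → ℝ, (∀ k, x k ∈ Set.Icc (lo k) (hi k)) ∧
          (∀ i, dotp (a i) x ≤ b i + α i) ∧ (∀ j, dotp (c j) x = d j + β j) ∧
          y = p x}) := by
  classical
  obtain ⟨x₀, hx₀, hx₀a, hx₀c⟩ := hfeaspert
  have part1 : ∀ ℓ : ∀ k, Fin (δ k + 1),
      tstar - (∑ i, lamstar i * α i) - (∑ j, mustar j * β j)
        ≤ q (vrep δ lo hi ℓ)
          + ∑ i, lamstar i * (aLift δ (a i) (vrep δ lo hi ℓ) - b i - α i)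
          + ∑ j, mustar j * (aLift δ (c j) (vrep δ lo hi ℓ) - d j - β j) := by
    intro ℓ
    have h := hfeasdual ℓ
    have e1 : ∑ i, lamstar i * (aLift δ (a i) (vrep δ lo hi ℓ) - b i - α i)
        = (∑ i, lamstar i * (aLift δ (a i) (vrep δ lo hi ℓ) - b i))
          - ∑ i, lamstar i * α i := by
      rw [← Finset.sum_sub_distrib]
      refine Finset.sum_congr rfl fun i _ => ?_
      ring
    have e2 : ∑ j, mustar j * (aLift δ (c j) (vrep δ lo hi ℓ) - d j - β j)
        = (∑ j, mustar j * (aLift δ (c j) (vrep δ lo hi ℓ) - d j))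
          - ∑ j, mustar j * β j := by
      rw [← Finset.sum_sub_distrib]
      refine Finset.sum_congr rfl fun j _ => ?_
      ring
    rw [e1, e2]
    linarith
  have hboundall : ∀ x' : Fin n → ℝ, (∀ k, x' k ∈ Set.Icc (lo k) (hi k)) →
      (∀ i, dotp (a i) x' ≤ b i + α i) → (∀ j, dotp (c j) x' = d j + β j) →
      ∀ t ∈ {t : ℝ | ∃ (lam : Fin mI → ℝ) (mu : Fin mJ → ℝ), (∀ i, 0 ≤ lam i) ∧
          ∀ ℓ : ∀ k, Fin (δ k + 1),
            t ≤ q (vrep δ lo hi ℓ)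
                + ∑ i, lam i * (aLift δ (a i) (vrep δ lo hi ℓ) - b i - α i)
                + ∑ j, mu j * (aLift δ (c j) (vrep δ lo hi ℓ) - d j - β j)},
      t ≤ p x' := by
    intro x' h1 h2 h3 t ht
    obtain ⟨lam, mu, hl, hf⟩ := ht
    exact weak_duality δ hδ lo hi hlt p q hqma hqsym hqdiag a b c d α β t lam mu hl hf
      x' h1 h2 h3
  have hmem : (tstar - (∑ i, lamstar i * α i) - (∑ j, mustar j * β j))
      ∈ {t : ℝ | ∃ (lam : Fin mI → ℝ) (mu : Fin mJ → ℝ), (∀ i, 0 ≤ lam i) ∧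
          ∀ ℓ : ∀ k, Fin (δ k + 1),
            t ≤ q (vrep δ lo hi ℓ)
                + ∑ i, lam i * (aLift δ (a i) (vrep δ lo hi ℓ) - b i - α i)
                + ∑ j, mu j * (aLift δ (c j) (vrep δ lo hi ℓ) - d j - β j)} :=
    ⟨lamstar, mustar, hlam, part1⟩
  refine ⟨part1, le_csSup ⟨p x₀, fun t ht => hboundall x₀ hx₀ hx₀a hx₀c t ht⟩ hmem, ?_⟩
  refine le_csInf ⟨p x₀, x₀, hx₀, hx₀a, hx₀c, rfl⟩ ?_
  rintro y ⟨x', h1, h2, h3, rfl⟩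
  exact csSup_le ⟨_, hmem⟩ (hboundall x' h1 h2 h3)
end
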